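/- arXiv:1006.1741 — 7 statements merged into one kernel-verified Lean document; each statement's English description precedes it below -/
import Mathlib

section
/- Let G = (X, E, Y) be a finite connected graph with nonempty boundary set Y ⊆ X. For extensions u, v : X → ℝ^m of g : Y → ℝ^m, say v is tighter than u if sup{Su(x) : x ∈ X∖Y, Su(x) > Sv(x)} > sup{Sv(x) : x ∈ X∖Y, Su(x) < Sv(x)} (with sup ∅ = 0). If lv(u) ∈ ℝ^{|X∖Y|} denotes the values of Su listed in non-increasing order, then v tighter than u implies lv(v) < lv(u) in the lexicographic order. -/
/-!
Let `x₀` be an interior vertex realising the left-hand supremum in `Tighter`, and `a := Su(x₀)`.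
For every threshold `r ≥ a`, each interior vertex with `Sv ≥ r` also has `Su ≥ r`, since where
`Sv` exceeds `Su` it is at most the right-hand supremum, which is `< a`; at `r = a` the inclusion
is strict because of `x₀`. Two non-increasing lists such that above every threshold `r ≥ a` the
first has at most as many entries `≥ r` as the second, strictly fewer for `r = a`, are in strict
lexicographic order.
-/

/-- The local Lipschitz constant `Su(x) = sup_{y ~ x} ‖u y - u x‖` of a vertex function. -/
noncomputable def Sloc {X : Type*} {m : ℕ} (G : SimpleGraph X)
    (u : X → EuclideanSpace ℝ (Fin m)) (x : X) : ℝ :=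
  sSup {d : ℝ | ∃ y, G.Adj x y ∧ d = ‖u y - u x‖}

/-- `v` is tighter than `u` on `G` relative to the boundary set `Y`. -/
noncomputable def Tighter {X : Type*} {m : ℕ} (G : SimpleGraph X) (Y : Set X)
    (v u : X → EuclideanSpace ℝ (Fin m)) : Prop :=
  (∀ y ∈ Y, v y = u y) ∧
    sSup {d : ℝ | ∃ x, x ∉ Y ∧ Sloc G u x = d ∧ Sloc G v x < Sloc G u x} >
      sSup {d : ℝ | ∃ x, x ∉ Y ∧ Sloc G v x = d ∧ Sloc G u x < Sloc G v x}

/-- The values of `Su` on `X \ Y`, listed in non-increasing order. -/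
noncomputable def lv {X : Type*} [Fintype X] [DecidableEq X] {m : ℕ} (G : SimpleGraph X)
    (Y : Finset X) (u : X → EuclideanSpace ℝ (Fin m)) : List ℝ :=
  (((Finset.univ \ Y).val.map (Sloc G u)).sort (· ≤ ·)).reverse

namespace List

theorem lex_lt_of_countP_le_of_countP_lt {α : Type*} [LinearOrder α] {l₁ l₂ : List α}
    (h₁ : l₁.Pairwise (· ≥ ·)) (h₂ : l₂.Pairwise (· ≥ ·)) {a : α}
    (hle : ∀ r, a ≤ r → l₁.countP (r ≤ ·) ≤ l₂.countP (r ≤ ·))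
    (hlt : l₁.countP (a ≤ ·) < l₂.countP (a ≤ ·)) : Lex (· < ·) l₁ l₂ := by
  induction l₂ generalizing l₁ with
  | nil => simp at hlt
  | cons y t₂ ih =>
    cases l₁ with
    | nil => exact .nil
    | cons x t₁ =>
      rcases lt_trichotomy x y with hxy | rfl | hyx
      · exact .rel hxy
      · refine .cons (ih h₁.of_cons h₂.of_cons (fun r hr => ?_) ?_)
        · have := hle r hr
          simp only [countP_cons] at this
          omega
        · simp only [countP_cons] at hlt
          omega
      · have hl₂ : ∀ r, x ≤ r → (y :: t₂).countP (r ≤ ·) = 0 := by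
          intro r hxr
          simp only [countP_eq_zero, mem_cons, decide_eq_true_eq, not_le, forall_eq_or_imp]
          exact ⟨hyx.trans_le hxr,
            fun z hz => ((rel_of_pairwise_cons h₂ hz).trans_lt hyx).trans_le hxr⟩
        rcases lt_or_ge x a with hxa | hax
        · simp [hl₂ a hxa.le] at hlt
        · have := hle x hax
          simp [hl₂ x le_rfl] at this

end List

section DescendingValues

open Finset

variable {ι β : Type*} [LinearOrder β] (s : Finset ι) (f : ι → β)

theorem pairwise_ge_reverse_sort_map :
    ((s.val.map f).sort (· ≤ ·)).reverse.Pairwise (· ≥ ·) :=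
  List.pairwise_reverse.mpr (Multiset.pairwise_sort _ _)

theorem countP_reverse_sort_map (r : β) :
    ((s.val.map f).sort (· ≤ ·)).reverse.countP (r ≤ ·) = #{x ∈ s | r ≤ f x} := by
  rw [List.countP_reverse, ← Multiset.coe_countP, Multiset.sort_eq, Multiset.countP_map,
    card_def, filter_val]

theorem lex_reverse_sort_map_lt {g : ι → β} {x₀ : ι} (hx₀ : x₀ ∈ s) (hgf : g x₀ < f x₀)
    (hbound : ∀ x ∈ s, f x < g x → g x < f x₀) :
    List.Lex (· < ·) ((s.val.map g).sort (· ≤ ·)).reverse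
      ((s.val.map f).sort (· ≤ ·)).reverse := by
  have hsub : ∀ r, f x₀ ≤ r → {x ∈ s | r ≤ g x} ⊆ {x ∈ s | r ≤ f x} := by
    intro r hr x hx
    simp only [mem_filter] at hx ⊢
    refine ⟨hx.1, hx.2.trans (not_lt.mp fun hfg => ?_)⟩
    exact (hbound x hx.1 hfg).not_ge (hr.trans hx.2)
  refine List.lex_lt_of_countP_le_of_countP_lt (pairwise_ge_reverse_sort_map s g)
    (pairwise_ge_reverse_sort_map s f) (a := f x₀) (fun r hr => ?_) ?_
  · simp only [countP_reverse_sort_map]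
    exact card_le_card (hsub r hr)
  · simp only [countP_reverse_sort_map]
    refine card_lt_card ⟨hsub _ le_rfl, fun h => ?_⟩
    have := h (mem_filter.mpr ⟨hx₀, le_rfl⟩)
    exact hgf.not_ge (mem_filter.mp this).2

end DescendingValues

theorem Sloc_nonneg {X : Type*} {m : ℕ} (G : SimpleGraph X) (u : X → EuclideanSpace ℝ (Fin m))
    (x : X) : 0 ≤ Sloc G u x :=
  Real.sSup_nonneg (by rintro _ ⟨y, -, rfl⟩; exact norm_nonneg _)

theorem Tighter.exists_max_decrease {X : Type*} [Finite X] {m : ℕ} {G : SimpleGraph X}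
    {Y : Set X} {v u : X → EuclideanSpace ℝ (Fin m)} (h : Tighter G Y v u) :
    ∃ x₀ ∉ Y, Sloc G v x₀ < Sloc G u x₀ ∧
      ∀ x ∉ Y, Sloc G u x < Sloc G v x → Sloc G v x < Sloc G u x₀ := by
  obtain ⟨-, hgt⟩ := h
  set SA := {d : ℝ | ∃ x, x ∉ Y ∧ Sloc G u x = d ∧ Sloc G v x < Sloc G u x}
  set SB := {d : ℝ | ∃ x, x ∉ Y ∧ Sloc G v x = d ∧ Sloc G u x < Sloc G v x}
  have hSA : SA.Finite :=
    (Set.finite_range (Sloc G u)).subset (by rintro _ ⟨x, -, rfl, -⟩; exact ⟨x, rfl⟩)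
  have hSB : SB.Finite :=
    (Set.finite_range (Sloc G v)).subset (by rintro _ ⟨x, -, rfl, -⟩; exact ⟨x, rfl⟩)
  have hB : 0 ≤ sSup SB :=
    Real.sSup_nonneg (by rintro _ ⟨x, -, rfl, -⟩; exact Sloc_nonneg G v x)
  -- `sSup ∅ = 0 ≤ sSup SB`, so the strict inequality forces `SA ≠ ∅`.
  have hne : SA.Nonempty := by
    refine Set.nonempty_iff_ne_empty.mpr fun hemp => ?_
    rw [hemp, Real.sSup_empty] at hgt
    exact hgt.not_ge hB
  obtain ⟨x₀, hx₀, hA, hlt⟩ := hne.csSup_mem hSA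
  refine ⟨x₀, hx₀, hlt, fun x hx hx' => ?_⟩
  rw [hA]
  exact (le_csSup hSB.bddAbove ⟨x, hx, rfl, hx'⟩).trans_lt hgt

theorem stmt0_general {X : Type*} [Fintype X] [DecidableEq X] {m : ℕ} (G : SimpleGraph X)
    (Y : Finset X)
    (u v : X → EuclideanSpace ℝ (Fin m))
    (h : Tighter G (Y : Set X) v u) :
    List.Lex (· < ·) (lv G Y v) (lv G Y u) := by
  obtain ⟨x₀, hx₀, hlt, hbound⟩ := h.exists_max_decrease
  exact lex_reverse_sort_map_lt _ _ (Finset.mem_sdiff.mpr ⟨Finset.mem_univ _, hx₀⟩) hlt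
    fun x hx => hbound x (Finset.mem_sdiff.mp hx).2

theorem stmt0 {X : Type*} [Fintype X] [DecidableEq X] {m : ℕ} (G : SimpleGraph X)
    (hconn : G.Connected) (Y : Finset X) (hY : Y.Nonempty)
    (u v : X → EuclideanSpace ℝ (Fin m))
    (h : Tighter G (Y : Set X) v u) :
    List.Lex (· < ·) (lv G Y v) (lv G Y u) :=
  stmt0_general G Y u v h
end

section
/- Let G = (X, E, Y) be a finite connected graph with nonempty Y ⊆ X and g : Y → ℝ^m. There is a unique tight extension u : X → ℝ^m of g; moreover, this u is tighter than every other extension v ≠ u of g. -/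
/-- `u` is a tight function on `G` relative to the boundary set `Y`. -/
noncomputable def Tight {X : Type*} {m : ℕ} (G : SimpleGraph X) (Y : Set X)
    (u : X → EuclideanSpace ℝ (Fin m)) : Prop :=
  ¬ ∃ v, Tighter G Y v u


/-!
Extensions of `g` are compared through the values of `Sloc` on `X ∖ Y`, sorted decreasingly.
By compactness some extension `u` minimizes them lexicographically: it minimizes successively the
sums of the `k` largest values. Given another extension `v`, the midpoint of `u` and `v` would
beat `u` unless `u` is tighter than `v` or `Sv = Su` off `Y`. In the latter case, strict convexity
of the Euclidean norm makes `u - v` constant along every edge where the midpoint attains its local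
Lipschitz constant. If `u ≠ v`, the set of vertices joined by such edges to a vertex where `u ≠ v`
with the largest `Su` misses `Y`, and contracting the midpoint slightly on it would beat `u` again.
Tightness and uniqueness of `u` then follow from the asymmetry of "tighter than".
-/

open Finset Filter Topology

noncomputable section

open scoped Classical

namespace TightExtension

variable {X : Type*} {m : ℕ}

section Sloc

variable {G : SimpleGraph X} {u v : X → EuclideanSpace ℝ (Fin m)} {x y : X}

theorem smul_add_smul_sub (a b : ℝ) (u v : X → EuclideanSpace ℝ (Fin m)) (x y : X) :
    (a • u + b • v) y - (a • u + b • v) x = a • (u y - u x) + b • (v y - v x) := by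
  simp only [Pi.add_apply, Pi.smul_apply]
  module

theorem sloc_nonneg (G : SimpleGraph X) (u : X → EuclideanSpace ℝ (Fin m)) (x : X) :
    0 ≤ Sloc G u x :=
  Real.sSup_nonneg (by rintro _ ⟨y, -, rfl⟩; positivity)

variable [Fintype X]

-- The vertex itself contributes `0`, matching the junk value `sSup ∅ = 0` at isolated vertices.
theorem sloc_eq_sup' (G : SimpleGraph X) (u : X → EuclideanSpace ℝ (Fin m)) (x : X) :
    Sloc G u x = (insert x (univ.filter (G.Adj x))).sup' (insert_nonempty _ _)
      (fun y => ‖u y - u x‖) := by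
  have hS : {d : ℝ | ∃ y, G.Adj x y ∧ d = ‖u y - u x‖}
      = (fun y => ‖u y - u x‖) '' ↑(univ.filter (G.Adj x)) := by
    ext d; simp [eq_comm]
  rw [sup'_eq_csSup_image, coe_insert, Set.image_insert_eq, sub_self, norm_zero, Sloc, hS]
  rcases ((fun y => ‖u y - u x‖) '' ↑(univ.filter (G.Adj x))).eq_empty_or_nonempty with h | h
  · rw [h, ← Set.singleton_def, csSup_singleton, Real.sSup_empty]
  · rw [csSup_insert ((Set.toFinite _).bddAbove) h,
      max_eq_right (Real.sSup_nonneg (by rintro _ ⟨y, -, rfl⟩; positivity))]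

theorem norm_le_sloc (u : X → EuclideanSpace ℝ (Fin m)) (h : G.Adj x y) :
    ‖u y - u x‖ ≤ Sloc G u x := by
  rw [sloc_eq_sup']
  exact le_sup' (fun y => ‖u y - u x‖) (mem_insert_of_mem (by simpa using h))

theorem exists_sloc_eq (G : SimpleGraph X) (u : X → EuclideanSpace ℝ (Fin m)) (x : X) :
    ∃ y, (y = x ∨ G.Adj x y) ∧ Sloc G u x = ‖u y - u x‖ := by
  obtain ⟨y, hy, h⟩ := exists_mem_eq_sup' (insert_nonempty x (univ.filter (G.Adj x)))
    (fun y => ‖u y - u x‖)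
  exact ⟨y, by simpa using hy, by rw [sloc_eq_sup', h]⟩

theorem sloc_lt_or_le {a b : ℝ} (hb : 0 ≤ b)
    (h : ∀ y, G.Adj x y → ‖u y - u x‖ < a ∨ ‖u y - u x‖ ≤ b) :
    Sloc G u x < a ∨ Sloc G u x ≤ b := by
  obtain ⟨y, rfl | hxy, hy⟩ := exists_sloc_eq G u x
  · right; simpa [hy] using hb
  · rw [hy]; exact h y hxy

theorem sloc_le {c : ℝ} (hc : 0 ≤ c) (h : ∀ y, G.Adj x y → ‖u y - u x‖ ≤ c) :
    Sloc G u x ≤ c :=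
  (sloc_lt_or_le hc fun y hxy => Or.inr (h y hxy)).elim le_of_lt id

theorem continuous_sloc (G : SimpleGraph X) (x : X) :
    Continuous fun u : X → EuclideanSpace ℝ (Fin m) => Sloc G u x := by
  simp_rw [sloc_eq_sup']
  exact Continuous.finset_sup'_apply _ fun y _ => by fun_prop

theorem sloc_smul_add_smul_le {a b : ℝ} (ha : 0 ≤ a) (hb : 0 ≤ b) :
    Sloc G (a • u + b • v) x ≤ a * Sloc G u x + b * Sloc G v x := by
  have := sloc_nonneg G u x
  have := sloc_nonneg G v x
  refine sloc_le (by positivity) fun y hxy => ?_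
  rw [smul_add_smul_sub]
  calc ‖a • (u y - u x) + b • (v y - v x)‖
      ≤ a * ‖u y - u x‖ + b * ‖v y - v x‖ := by
        refine (norm_add_le _ _).trans_eq ?_
        rw [norm_smul, norm_smul, Real.norm_of_nonneg ha, Real.norm_of_nonneg hb]
    _ ≤ a * Sloc G u x + b * Sloc G v x := by
        gcongr <;> exact norm_le_sloc _ hxy

end Sloc

section TopSum

variable {s : Finset X} {c c' : X → ℝ} {T : ℝ} {k : ℕ}

-- For nonnegative `c`, the sum of the `k` largest values of `c` on `s`.
def topSum (s : Finset X) (k : ℕ) (c : X → ℝ) : ℝ :=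
  (s.powerset.filter (#· ≤ k)).sup' ⟨∅, by simp⟩ fun A => ∑ x ∈ A, c x

theorem sum_le_topSum (c : X → ℝ) {A : Finset X} (hA : A ⊆ s) (hk : #A ≤ k) :
    ∑ x ∈ A, c x ≤ topSum s k c :=
  le_sup' (fun A => ∑ x ∈ A, c x) (mem_filter.2 ⟨mem_powerset.2 hA, hk⟩)

theorem topSum_le {a : ℝ} (h : ∀ A ⊆ s, #A ≤ k → ∑ x ∈ A, c x ≤ a) : topSum s k c ≤ a :=
  sup'_le _ _ fun A hA => h A (mem_powerset.1 (mem_filter.1 hA).1) (mem_filter.1 hA).2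

theorem topSum_lt {a : ℝ} (h : ∀ A ⊆ s, #A ≤ k → ∑ x ∈ A, c x < a) : topSum s k c < a :=
  (sup'_lt_iff _).2 fun A hA => h A (mem_powerset.1 (mem_filter.1 hA).1) (mem_filter.1 hA).2

theorem le_topSum_one {x : X} (hx : x ∈ s) : c x ≤ topSum s 1 c := by
  simpa using sum_le_topSum c (singleton_subset_iff.2 hx) (by simp)

theorem continuous_topSum {α : Type*} [TopologicalSpace α] {f : α → X → ℝ}
    (hf : ∀ x, Continuous fun a => f a x) : Continuous fun a => topSum s k (f a) :=
  Continuous.finset_sup'_apply _ fun _ _ => continuous_finsetSum _ fun x _ => hf x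

/- Points of `A` where `c' ≥ T` are matched with themselves, where `c' ≤ c`; the remaining points
of `A` (with `c' < T`) are matched with further points of `B`, where `c ≥ T`. -/
theorem sum_le_sum_of_dominated {A B : Finset X} (hT : 0 ≤ T)
    (hdom : ∀ x ∈ A, c' x < T ∨ c' x ≤ c x) (hAB : A.filter (T ≤ c' ·) ⊆ B)
    (hB : ∀ x ∈ B, T ≤ c x) (hcard : #A ≤ #B) :
    ∑ x ∈ A, c' x ≤ ∑ x ∈ B, c x := by
  set A₁ := A.filter (T ≤ c' ·)
  set A₂ := A.filter (¬ T ≤ c' ·)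
  have hA₂ : ∑ x ∈ A₂, c' x ≤ #A₂ * T := by
    simpa using sum_le_card_nsmul A₂ c' T fun x hx => (not_le.1 (mem_filter.1 hx).2).le
  have hBA₁ : #(B \ A₁) * T ≤ ∑ x ∈ B \ A₁, c x := by
    simpa using card_nsmul_le_sum (B \ A₁) c T fun x hx => hB x (mem_sdiff.1 hx).1
  have hcard' : (#A₂ : ℝ) ≤ #(B \ A₁) := by
    have : #A₁ + #A₂ = #A := card_filter_add_card_filter_not (s := A) (p := (T ≤ c' ·))
    rw [card_sdiff_of_subset hAB]
    exact_mod_cast (by omega : #A₂ ≤ #B - #A₁)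
  calc ∑ x ∈ A, c' x = ∑ x ∈ A₁, c' x + ∑ x ∈ A₂, c' x :=
        (sum_filter_add_sum_filter_not A _ c').symm
    _ ≤ ∑ x ∈ A₁, c x + #(B \ A₁) * T := by
        gcongr with x hx
        · exact (hdom x (mem_filter.1 hx).1).resolve_left (not_lt.2 (mem_filter.1 hx).2)
        · exact hA₂.trans (by gcongr)
    _ ≤ ∑ x ∈ A₁, c x + ∑ x ∈ B \ A₁, c x := by gcongr
    _ = ∑ x ∈ B, c x := by rw [add_comm, sum_sdiff hAB]

theorem sum_lt_sum_of_dominated {A B : Finset X} (hT : 0 < T)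
    (hdom : ∀ x ∈ A, c' x < T ∨ c' x ≤ c x) (hAB : A.filter (T ≤ c' ·) ⊆ B)
    (hB : ∀ x ∈ B, T ≤ c x) (hcard : #A ≤ #B) {x₀ : X} (hx₀B : x₀ ∈ B) (hx₀ : c' x₀ < T) :
    ∑ x ∈ A, c' x < ∑ x ∈ B, c x := by
  have hAB' : A.filter (T ≤ c' ·) ⊆ B.erase x₀ := fun x hx =>
    mem_erase.2 ⟨by rintro rfl; exact (mem_filter.1 hx).2.not_gt hx₀, hAB hx⟩
  have hB' : ∀ x ∈ B.erase x₀, T ≤ c x := fun x hx => hB x (mem_of_mem_erase hx)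
  have hsplit := sum_erase_add B c hx₀B
  have hcx₀ := hB x₀ hx₀B
  by_cases hhigh : ∀ x ∈ A, T ≤ c' x
  · have hA₁ : #A ≤ #(B.erase x₀) := by
      rw [← filter_true_of_mem hhigh]; exact card_le_card hAB'
    have := sum_le_sum_of_dominated hT.le hdom hAB' hB' hA₁
    linarith
  · obtain ⟨x₁, hx₁A, hx₁⟩ : ∃ x₁ ∈ A, c' x₁ < T := by simpa using hhigh
    have := sum_le_sum_of_dominated hT.le (fun x hx => hdom x (mem_of_mem_erase hx))
      ((filter_subset_filter _ (erase_subset x₁ A)).trans hAB') hB'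
      (by rw [card_erase_of_mem hx₁A, card_erase_of_mem hx₀B]; omega)
    rw [← sum_erase_add A c' hx₁A]
    linarith

theorem filter_subset_filter_of_dominated {A : Finset X} (hAs : A ⊆ s)
    (hdom : ∀ x ∈ s, c' x < T ∨ c' x ≤ c x) : A.filter (T ≤ c' ·) ⊆ s.filter (T ≤ c ·) :=
  fun x hx => by
    obtain ⟨hxA, hx⟩ := mem_filter.1 hx
    exact mem_filter.2 ⟨hAs hxA, hx.trans ((hdom x (hAs hxA)).resolve_left hx.not_gt)⟩

theorem topSum_le_topSum_of_dominated (hT : 0 ≤ T) (hdom : ∀ x ∈ s, c' x < T ∨ c' x ≤ c x)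
    (hk : k ≤ #(s.filter (T ≤ c ·))) : topSum s k c' ≤ topSum s k c := by
  refine topSum_le fun A hAs hAk => ?_
  obtain ⟨B, hA₁B, hBU, rfl⟩ := exists_subsuperset_card_eq
    (filter_subset_filter_of_dominated hAs hdom) ((card_filter_le _ _).trans hAk) hk
  exact (sum_le_sum_of_dominated hT (fun x hx => hdom x (hAs hx)) hA₁B
    (fun x hx => (mem_filter.1 (hBU hx)).2) hAk).trans
    (sum_le_topSum c (hBU.trans (filter_subset _ s)) le_rfl)

theorem topSum_lt_topSum_of_dominated (hT : 0 < T) (hdom : ∀ x ∈ s, c' x < T ∨ c' x ≤ c x)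
    {x₀ : X} (hx₀s : x₀ ∈ s) (hx₀ : c' x₀ < T) (hx₀T : T ≤ c x₀) :
    topSum s #(s.filter (T ≤ c ·)) c' < topSum s #(s.filter (T ≤ c ·)) c := by
  refine topSum_lt fun A hAs hAk => ?_
  exact (sum_lt_sum_of_dominated hT (fun x hx => hdom x (hAs hx))
    (filter_subset_filter_of_dominated hAs hdom) (fun x hx => (mem_filter.1 hx).2) hAk
    (mem_filter.2 ⟨hx₀s, hx₀T⟩) hx₀).trans_le (sum_le_topSum c (filter_subset _ s) le_rfl)

end TopSum

theorem _root_.IsCompact.exists_lexMin {V : Type*} [TopologicalSpace V] {s : Set V}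
    (hs : IsCompact s) (hne : s.Nonempty) {σ : ℕ → V → ℝ} (hσ : ∀ k, Continuous (σ k)) (n : ℕ) :
    ∃ u ∈ s, ∀ w ∈ s, ∀ k ≤ n, (∀ j < k, σ j w ≤ σ j u) → σ k u ≤ σ k w := by
  induction n generalizing s σ with
  | zero =>
    obtain ⟨u, hu, hmin⟩ := hs.exists_isMinOn hne (hσ 0).continuousOn
    exact ⟨u, hu, fun w hw k hk _ => Nat.le_zero.1 hk ▸ hmin hw⟩
  | succ n ih =>
    obtain ⟨u₀, hu₀, hmin⟩ := hs.exists_isMinOn hne (hσ 0).continuousOn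
    obtain ⟨u, ⟨hu, hu₀u⟩, hlex⟩ := ih (s := s ∩ {v | σ 0 v ≤ σ 0 u₀})
      (hs.inter_right (isClosed_le (hσ 0) continuous_const))
      ⟨u₀, hu₀, show σ 0 u₀ ≤ σ 0 u₀ from le_rfl⟩ (fun k => hσ (k + 1))
    refine ⟨u, hu, fun w hw k hk hlt => ?_⟩
    cases k with
    | zero => exact hu₀u.trans (hmin hw)
    | succ k =>
      exact hlex w ⟨hw, (hlt 0 k.succ_pos).trans hu₀u⟩ k (by omega)
        fun j hj => hlt (j + 1) (by omega)

section Existence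

variable {G : SimpleGraph X} {Y : Set X}

-- An improvement at some level `T` is exactly a lexicographic decrease of the decreasingly
-- sorted values of `Sloc` on `X ∖ Y`.
def Improves (G : SimpleGraph X) (Y : Set X) (w u : X → EuclideanSpace ℝ (Fin m)) : Prop :=
  ∃ T, (∀ x ∉ Y, Sloc G w x < T ∨ Sloc G w x ≤ Sloc G u x) ∧
    ∃ x₀ ∉ Y, Sloc G w x₀ < T ∧ T ≤ Sloc G u x₀

def IsLexMinimal (G : SimpleGraph X) (Y : Set X) (u : X → EuclideanSpace ℝ (Fin m)) : Prop :=
  ∀ w, (∀ y ∈ Y, w y = u y) → ¬ Improves G Y w u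

theorem norm_le_add_length_mul {u : X → EuclideanSpace ℝ (Fin m)} {C c : ℝ}
    (hC : ∀ y ∈ Y, ‖u y‖ ≤ C) (hc : 0 ≤ c) (hstep : ∀ x ∉ Y, ∀ y, G.Adj x y → ‖u y - u x‖ ≤ c)
    {a b : X} (p : G.Walk a b) (hb : b ∈ Y) : ‖u a‖ ≤ C + p.length * c := by
  induction p with
  | nil => simpa using hC _ hb
  | @cons a a' _ haa' p ih =>
    rw [SimpleGraph.Walk.length_cons, Nat.cast_succ]
    by_cases ha : a ∈ Y
    · have := hC a ha
      have : 0 ≤ (p.length + 1 : ℝ) * c := by positivity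
      linarith
    · calc ‖u a‖ ≤ ‖u a'‖ + ‖u a' - u a‖ := by
            rw [norm_sub_rev]; exact norm_le_norm_add_norm_sub' _ _
        _ ≤ (C + p.length * c) + c := add_le_add (ih hb) (hstep a ha a' haa')
        _ = C + (p.length + 1) * c := by ring

variable [Fintype X]

theorem isBounded_setOf_sloc_le (hconn : G.Connected) (hY : Y.Nonempty)
    (g : X → EuclideanSpace ℝ (Fin m)) {c : ℝ} (hc : 0 ≤ c) :
    Bornology.IsBounded {u | (∀ y ∈ Y, u y = g y) ∧ ∀ x ∉ Y, Sloc G u x ≤ c} := by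
  obtain ⟨y₀, hy₀⟩ := hY
  have hg : ∀ y, ‖g y‖ ≤ ∑ z, ‖g z‖ := fun y =>
    single_le_sum (f := fun z => ‖g z‖) (fun _ _ => norm_nonneg _) (mem_univ y)
  have : 0 ≤ ∑ z, ‖g z‖ := sum_nonneg fun _ _ => norm_nonneg _
  refine isBounded_iff_forall_norm_le.2 ⟨∑ z, ‖g z‖ + Fintype.card X * c, fun u ⟨hug, hu⟩ => ?_⟩
  refine (pi_norm_le_iff_of_nonneg (by positivity)).2 fun z => ?_
  obtain ⟨p, hp⟩ := hconn.preconnected.exists_isPath z y₀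
  calc ‖u z‖ ≤ ∑ z, ‖g z‖ + p.length * c :=
        norm_le_add_length_mul (fun y hy => hug y hy ▸ hg y) hc
          (fun x hx y hxy => (norm_le_sloc u hxy).trans (hu x hx)) p hy₀
    _ ≤ ∑ z, ‖g z‖ + Fintype.card X * c := by gcongr; exact hp.length_lt.le

/- The lexicographic minimum of the top sums of `Sloc` off `Y` is taken on a compact set `K` of
extensions which, by the case `k = 1`, contains every extension improving on it. -/
theorem exists_isLexMinimal (hconn : G.Connected) (hY : Y.Nonempty)
    (g : X → EuclideanSpace ℝ (Fin m)) :
    ∃ u, (∀ y ∈ Y, u y = g y) ∧ IsLexMinimal G Y u := by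
  set F : Finset X := univ.filter (· ∉ Y)
  set σ : ℕ → (X → EuclideanSpace ℝ (Fin m)) → ℝ := fun k u => topSum F k (Sloc G u)
  set K : Set (X → EuclideanSpace ℝ (Fin m)) := {u | (∀ y ∈ Y, u y = g y) ∧ σ 1 u ≤ σ 1 g}
  have hK : IsCompact K := by
    refine Metric.isCompact_of_isClosed_isBounded ?_ ?_
    · have hext : IsClosed {u : X → EuclideanSpace ℝ (Fin m) | ∀ y ∈ Y, u y = g y} := by
        simp only [Set.ofPred_forall]
        exact isClosed_biInter fun y _ => isClosed_eq (continuous_apply y) continuous_const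
      exact hext.inter (isClosed_le (continuous_topSum (continuous_sloc G)) continuous_const)
    · have : 0 ≤ σ 1 g := by simpa using sum_le_topSum (Sloc G g) (empty_subset F) (k := 1)
      exact (isBounded_setOf_sloc_le hconn hY g this).subset fun u ⟨hug, hu⟩ =>
        ⟨hug, fun x hx => (le_topSum_one (by simpa [F])).trans hu⟩
  obtain ⟨u, ⟨hug, hu⟩, hlex⟩ := hK.exists_lexMin ⟨g, fun _ _ => rfl, le_rfl⟩
    (fun k => continuous_topSum (continuous_sloc G)) #F
  refine ⟨u, hug, fun w hwu ⟨T, hdom, x₀, hx₀Y, hx₀w, hx₀u⟩ => ?_⟩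
  have hT : 0 < T := (sloc_nonneg G w x₀).trans_lt hx₀w
  have hdomF : ∀ x ∈ F, Sloc G w x < T ∨ Sloc G w x ≤ Sloc G u x := fun x hx =>
    hdom x (by simpa [F] using hx)
  have hx₀F : x₀ ∈ F := by simpa [F]
  set k := #(F.filter (T ≤ Sloc G u ·))
  have hle : ∀ j ≤ k, σ j w ≤ σ j u := fun j hj => topSum_le_topSum_of_dominated hT.le hdomF hj
  have hlt : σ k w < σ k u := topSum_lt_topSum_of_dominated hT hdomF hx₀F hx₀w hx₀u
  have hk : 1 ≤ k := card_pos.2 ⟨x₀, mem_filter.2 ⟨hx₀F, hx₀u⟩⟩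
  have hwK : w ∈ K := ⟨fun y hy => (hwu y hy).trans (hug y hy), (hle 1 hk).trans hu⟩
  exact (hlex w hwK k (card_filter_le _ _) fun j hj => hle j hj.le).not_gt hlt

end Existence

section Uniqueness

variable {G : SimpleGraph X} {Y : Set X} {u v : X → EuclideanSpace ℝ (Fin m)}

theorem _root_.SimpleGraph.Reachable.mem_of_adj_mem {V : Type*} {H : SimpleGraph V} {S : Set V}
    {a b : V} (h : H.Reachable a b) (ha : a ∈ S) (hS : ∀ x ∈ S, ∀ y, H.Adj x y → y ∈ S) :
    b ∈ S := by
  obtain ⟨p⟩ := h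
  induction p with
  | nil => exact ha
  | cons hxy _ ih => exact ih (hS _ ha _ hxy)

theorem IsLexMinimal.sloc_eq_of_le {w : X → EuclideanSpace ℝ (Fin m)} (hu : IsLexMinimal G Y u)
    (hwu : ∀ y ∈ Y, w y = u y) (hle : ∀ x ∉ Y, Sloc G w x ≤ Sloc G u x) :
    ∀ x ∉ Y, Sloc G w x = Sloc G u x := by
  by_contra! ⟨x₀, hx₀, hne⟩
  exact hu w hwu ⟨Sloc G u x₀, fun x hx => Or.inr (hle x hx), x₀, hx₀,
    (hle x₀ hx₀).lt_of_ne hne, le_rfl⟩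

theorem IsLexMinimal.congr {w : X → EuclideanSpace ℝ (Fin m)} (hu : IsLexMinimal G Y u)
    (hwu : ∀ y ∈ Y, w y = u y) (hS : ∀ x ∉ Y, Sloc G w x = Sloc G u x) : IsLexMinimal G Y w :=
  fun w' hw' ⟨T, hdom, x₀, hx₀, h₁, h₂⟩ => hu w' (fun y hy => (hw' y hy).trans (hwu y hy))
    ⟨T, fun x hx => hS x hx ▸ hdom x hx, x₀, hx₀, h₁, hS x₀ hx₀ ▸ h₂⟩

variable [Fintype X]

theorem exists_norm_add_smul_lt {D : Set X} {T : ℝ}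
    (hbd : ∀ x ∈ D, ∀ y ∉ D, G.Adj x y → ‖u y - u x‖ < T) :
    ∃ δ : ℝ, (∀ x ∈ D, ∀ y ∉ D, G.Adj x y → ‖(u y - u x) + δ • u x‖ < T) ∧ δ ∈ Set.Ioc 0 1 := by
  have hev : ∀ᶠ δ in 𝓝 (0 : ℝ), ∀ x ∈ D, ∀ y ∉ D, G.Adj x y → ‖(u y - u x) + δ • u x‖ < T := by
    refine eventually_all.2 fun x => eventually_imp_distrib_left.2 fun hx =>
      eventually_all.2 fun y => eventually_imp_distrib_left.2 fun hy =>
      eventually_imp_distrib_left.2 fun hxy => ?_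
    have hcont : ContinuousAt (fun δ : ℝ => ‖(u y - u x) + δ • u x‖) 0 := by fun_prop
    exact hcont.eventually_lt continuousAt_const (by simpa using hbd x hx y hy hxy)
  exact ((hev.filter_mono nhdsWithin_le_nhds).and (Ioc_mem_nhdsGT one_pos)).exists

/- Contracting `u` on `D` towards the origin by a small factor makes `Sloc` drop below `T` on `D`,
while the edges leaving `D`, all shorter than `T`, stay shorter than `T`. -/
theorem exists_improves_of_boundary_lt {D : Set X} {T : ℝ} {x₀ : X} (hT : 0 < T)
    (hx₀ : x₀ ∈ D) (hDY : ∀ x ∈ D, x ∉ Y) (hDS : ∀ x ∈ D, Sloc G u x = T)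
    (hbd : ∀ x ∈ D, ∀ y ∉ D, G.Adj x y → ‖u y - u x‖ < T) :
    ∃ w, (∀ y ∈ Y, w y = u y) ∧ Improves G Y w u := by
  obtain ⟨δ, hδbd, hδ, hδ1⟩ := exists_norm_add_smul_lt hbd
  set w : X → EuclideanSpace ℝ (Fin m) := fun x => if x ∈ D then (1 - δ) • u x else u x
  have hin : ∀ x ∈ D, Sloc G w x < T := by
    intro x hx
    have hδT : 0 ≤ (1 - δ) * T := by nlinarith
    refine (sloc_lt_or_le hδT fun y hxy => ?_).elim id fun h => h.trans_lt (by nlinarith)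
    by_cases hy : y ∈ D
    · right
      simp only [w, if_pos hx, if_pos hy, ← smul_sub, norm_smul,
        Real.norm_of_nonneg (sub_nonneg.2 hδ1)]
      exact mul_le_mul_of_nonneg_left ((norm_le_sloc u hxy).trans (hDS x hx).le)
        (sub_nonneg.2 hδ1)
    · left
      have : w y - w x = (u y - u x) + δ • u x := by simp only [w, if_pos hx, if_neg hy]; module
      exact this ▸ hδbd x hx y hy hxy
  have hout : ∀ z ∉ D, Sloc G w z < T ∨ Sloc G w z ≤ Sloc G u z := fun z hz =>
    sloc_lt_or_le (sloc_nonneg G u z) fun y hzy => by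
      by_cases hy : y ∈ D
      · left
        have : w y - w z = -((u z - u y) + δ • u y) := by
          simp only [w, if_pos hy, if_neg hz]; module
        rw [this, norm_neg]
        exact hδbd y hy z hz hzy.symm
      · right
        simp only [w, if_neg hy, if_neg hz]
        exact norm_le_sloc u hzy
  refine ⟨w, fun y hy => if_neg fun hyD => hDY y hyD hy, T, fun x _ => ?_,
    x₀, hDY x₀ hx₀, hin x₀ hx₀, (hDS x₀ hx₀).ge⟩
  by_cases hx : x ∈ D
  · exact Or.inl (hin x hx)
  · exact hout x hx

/- Take `x₀` with `ψ x₀ ≠ 0` maximizing `T = Sloc G u x₀`. The vertices reached from `x₀` along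
edges of length `T` form a set `D` off `Y` on which `Sloc G u = T` and every edge leaving `D` is
shorter than `T`. If `T > 0`, contracting `u` on `D` improves it; if `T = 0`, no edge leaves `D`,
so `D` meets `Y`. -/
theorem IsLexMinimal.eq_zero_of_critical {α : Type*} [Zero α] (hu : IsLexMinimal G Y u)
    (hconn : G.Connected) (hY : Y.Nonempty) {ψ : X → α} (hψY : ∀ y ∈ Y, ψ y = 0)
    (hψ : ∀ x ∉ Y, ∀ y, G.Adj x y → ‖u y - u x‖ = Sloc G u x → ψ y = ψ x) : ψ = 0 := by
  by_contra hψ0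
  obtain ⟨x₁, hx₁⟩ : ∃ x, ψ x ≠ 0 := by by_contra! h; exact hψ0 (funext h)
  obtain ⟨x₀, hx₀, hmax⟩ := (univ.filter (ψ · ≠ 0)).exists_max_image (Sloc G u)
    ⟨x₁, by simpa using hx₁⟩
  set T := Sloc G u x₀
  have hψx₀ : ψ x₀ ≠ 0 := (mem_filter.1 hx₀).2
  set D : Set X := {z | Relation.ReflTransGen (fun p q => G.Adj p q ∧ ‖u q - u p‖ = T) x₀ z}
  have hD : ∀ z ∈ D, ψ z = ψ x₀ ∧ z ∉ Y ∧ Sloc G u z = T := by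
    intro z hz
    induction hz with
    | refl => exact ⟨rfl, fun h => hψx₀ (hψY _ h), rfl⟩
    | @tail p q _ hpq ih =>
      obtain ⟨hψp, hpY, hSp⟩ := ih
      have hψq : ψ q = ψ x₀ := (hψ p hpY q hpq.1 (hpq.2.trans hSp.symm)).trans hψp
      refine ⟨hψq, fun h => hψx₀ (hψq ▸ hψY q h),
        le_antisymm (hmax q (by simpa [hψq] using hψx₀)) ?_⟩
      calc T = ‖u p - u q‖ := by rw [norm_sub_rev, hpq.2]
        _ ≤ Sloc G u q := norm_le_sloc u hpq.1.symm
  have hbd : ∀ x ∈ D, ∀ y ∉ D, G.Adj x y → ‖u y - u x‖ < T := fun x hx y hy hxy =>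
    ((norm_le_sloc u hxy).trans (hD x hx).2.2.le).lt_of_ne fun h => hy (hx.tail ⟨hxy, h⟩)
  rcases (show 0 ≤ T from sloc_nonneg G u x₀).eq_or_lt with hT | hT
  · obtain ⟨y, hy⟩ := hY
    have hyD : y ∈ D := (hconn.preconnected x₀ y).mem_of_adj_mem Relation.ReflTransGen.refl
      fun x hx z hxz => by_contra fun hz => by
        linarith [hbd x hx z hz hxz, norm_nonneg (u z - u x)]
    exact (hD y hyD).2.1 hy
  · obtain ⟨w, hwu, hw⟩ := exists_improves_of_boundary_lt hT Relation.ReflTransGen.refl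
      (fun x hx => (hD x hx).2.1) (fun x hx => (hD x hx).2.2) hbd
    exact hu w hwu hw

/- On an edge where the midpoint `w` of `u` and `v` attains `Sloc G w x = Sloc G u x`, strict
convexity of the Euclidean norm forces `u y - u x = v y - v x`. -/
theorem IsLexMinimal.eq_of_sloc_eq (hu : IsLexMinimal G Y u) (hconn : G.Connected)
    (hY : Y.Nonempty) (hvu : ∀ y ∈ Y, v y = u y) (hS : ∀ x ∉ Y, Sloc G v x = Sloc G u x) :
    v = u := by
  set w := (1 / 2 : ℝ) • u + (1 / 2 : ℝ) • v
  have hwu : ∀ y ∈ Y, w y = u y := fun y hy => by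
    simp only [w, Pi.add_apply, Pi.smul_apply, hvu y hy]; module
  have hwS : ∀ x ∉ Y, Sloc G w x = Sloc G u x := hu.sloc_eq_of_le hwu fun x hx =>
    sloc_smul_add_smul_le (by norm_num) (by norm_num) |>.trans_eq (by rw [hS x hx]; ring)
  have hcrit : ∀ x ∉ Y, ∀ y, G.Adj x y → ‖w y - w x‖ = Sloc G w x → (u - v) y = (u - v) x := by
    intro x hx y hxy hlen
    by_contra hne
    have hne' : u y - u x ≠ v y - v x := fun h =>
      hne (by rw [Pi.sub_apply, Pi.sub_apply, sub_eq_sub_iff_sub_eq_sub, h])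
    have := norm_combo_lt_of_ne (norm_le_sloc u hxy) (hS x hx ▸ norm_le_sloc v hxy) hne'
      (a := 1 / 2) (b := 1 / 2) (by norm_num) (by norm_num) (by norm_num)
    rw [← smul_add_smul_sub, hlen, hwS x hx] at this
    exact this.false
  have := (hu.congr hwu hwS).eq_zero_of_critical hconn hY (ψ := u - v)
    (fun y hy => by simp [hvu y hy]) hcrit
  exact (sub_eq_zero.1 this).symm

/- If `u` were not tighter than `v`, the midpoint of `u` and `v` would improve on `u` at the level
`s = sup {Su x | Sv x < Su x}`, unless that set is empty; then `Sv = Su` off `Y`. -/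
theorem IsLexMinimal.tighter (hu : IsLexMinimal G Y u) (hconn : G.Connected) (hY : Y.Nonempty)
    (hvu : ∀ y ∈ Y, v y = u y) (hne : v ≠ u) : Tighter G Y u v := by
  refine ⟨fun y hy => (hvu y hy).symm, not_le.1 fun hAB => ?_⟩
  set B := {d : ℝ | ∃ x, x ∉ Y ∧ Sloc G u x = d ∧ Sloc G v x < Sloc G u x}
  have hBfin : B.Finite := (Set.finite_range (Sloc G u)).subset <| by
    rintro _ ⟨x, -, rfl, -⟩; exact ⟨x, rfl⟩
  have hAbdd : BddAbove {d : ℝ | ∃ x, x ∉ Y ∧ Sloc G v x = d ∧ Sloc G u x < Sloc G v x} :=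
    ((Set.finite_range (Sloc G v)).subset <| by rintro _ ⟨x, -, rfl, -⟩; exact ⟨x, rfl⟩).bddAbove
  have hA : ∀ x ∉ Y, Sloc G u x < Sloc G v x → Sloc G v x ≤ sSup B := fun x hx h =>
    (le_csSup hAbdd ⟨x, hx, rfl, h⟩).trans hAB
  have hB : ∀ x ∉ Y, Sloc G v x < Sloc G u x → Sloc G u x ≤ sSup B := fun x hx h =>
    le_csSup hBfin.bddAbove ⟨x, hx, rfl, h⟩
  rcases B.eq_empty_or_nonempty with hB₀ | hBne
  · refine hne (hu.eq_of_sloc_eq hconn hY hvu fun x hx => le_antisymm ?_ ?_)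
    · by_contra! h
      have := hA x hx h
      rw [hB₀, Real.sSup_empty] at this
      linarith [sloc_nonneg G u x]
    · exact not_lt.1 fun h => hB₀.subset ⟨x, hx, rfl, h⟩
  · obtain ⟨x₀, hx₀, hx₀s, hx₀vu⟩ := hBne.csSup_mem hBfin
    set w := (1 / 2 : ℝ) • u + (1 / 2 : ℝ) • v
    have hw : ∀ x, Sloc G w x ≤ (Sloc G u x + Sloc G v x) / 2 := fun x =>
      sloc_smul_add_smul_le (by norm_num) (by norm_num) |>.trans_eq (by ring)
    refine hu w (fun y hy => by simp only [w, Pi.add_apply, Pi.smul_apply, hvu y hy]; module)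
      ⟨sSup B, fun x hx => ?_, x₀, hx₀, ?_, hx₀s.ge⟩
    · have := hw x
      rcases lt_trichotomy (Sloc G v x) (Sloc G u x) with h | h | h
      · exact Or.inl (by linarith [hB x hx h])
      · exact Or.inr (by linarith)
      · exact Or.inl (by linarith [hA x hx h])
    · linarith [hw x₀]

end Uniqueness

end TightExtension

end

theorem stmt2 {X : Type*} [Fintype X] {m : ℕ} (G : SimpleGraph X)
    (hconn : G.Connected) (Y : Set X) (hY : Y.Nonempty)
    (g : X → EuclideanSpace ℝ (Fin m)) :
    ∃ u : X → EuclideanSpace ℝ (Fin m),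
      (∀ y ∈ Y, u y = g y) ∧ Tight G Y u ∧
      (∀ v : X → EuclideanSpace ℝ (Fin m), (∀ y ∈ Y, v y = g y) → v ≠ u →
        Tighter G Y u v) ∧
      (∀ u' : X → EuclideanSpace ℝ (Fin m), (∀ y ∈ Y, u' y = g y) → Tight G Y u' →
        u' = u) := by
  obtain ⟨u, hug, hu⟩ := TightExtension.exists_isLexMinimal hconn hY g
  have htighter : ∀ v, (∀ y ∈ Y, v y = g y) → v ≠ u → Tighter G Y u v := fun v hvg hne =>
    hu.tighter hconn hY (fun y hy => (hvg y hy).trans (hug y hy).symm) hne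
  refine ⟨u, hug, ?_, htighter, fun u' hu'g hu' =>
    by_contra fun hne => hu' ⟨u, htighter u' hu'g hne⟩⟩
  rintro ⟨w, hwu, hlt⟩
  by_cases hw : w = u
  · subst hw
    exact lt_irrefl _ hlt
  · exact lt_asymm hlt (htighter w (fun y hy => (hwu y hy).trans (hug y hy)) hw).2
end

section
/- Let G = (X, E, Y) be a finite connected graph with nonempty Y ⊆ X. A function u : X → ℝ^m is tight on G if and only if it is edge-tight on G. -/
/-- `v` is edge-tighter than `u`: the comparison of suprema is taken over edges
with not both endpoints in `Y`, using `Ŝu({x,y}) = ‖u x - u y‖`. -/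
noncomputable def EdgeTighter {X : Type*} {m : ℕ} (G : SimpleGraph X) (Y : Set X)
    (v u : X → EuclideanSpace ℝ (Fin m)) : Prop :=
  (∀ y ∈ Y, v y = u y) ∧
    sSup {d : ℝ | ∃ x y, G.Adj x y ∧ ¬(x ∈ Y ∧ y ∈ Y) ∧ ‖u x - u y‖ = d ∧
        ‖v x - v y‖ < ‖u x - u y‖} >
      sSup {d : ℝ | ∃ x y, G.Adj x y ∧ ¬(x ∈ Y ∧ y ∈ Y) ∧ ‖v x - v y‖ = d ∧
        ‖u x - u y‖ < ‖v x - v y‖}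

/-- `u` is edge-tight on `G` relative to the boundary set `Y`. -/
noncomputable def EdgeTight {X : Type*} {m : ℕ} (G : SimpleGraph X) (Y : Set X)
    (u : X → EuclideanSpace ℝ (Fin m)) : Prop :=
  ¬ ∃ v, EdgeTighter G Y v u

/-!
Given `v` agreeing with `u` on `Y`, both directions use the same competitor `w`: the midpoint
of `u` and `v`, shrunk by a factor `1 - ε` at the vertices where `v ≠ u`. On an edge where the
increments of `u` and `v` differ, strict convexity of the norm makes the increment of the
midpoint strictly shorter than the longer of the two, and this survives for small `ε`. On an
edge where they agree, `v - u` is constant along it, so the increment of `w` is that of `u`,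
scaled by `1 - ε` if `v ≠ u` there. Hence, if `t` is the largest value of `u` (local or edge
constant) that `v` decreases and `s < t` the largest value of `v` that increases, then `w`
decreases `u` at a vertex or edge of value at least `t`, and each value of `w` exceeding `u`
stays below `t` or below some value of `u` that `w` decreases. So `w` beats `u` in the other
sense.
-/

open Filter Topology

section Interpolant

variable {X E : Type*} [NormedAddCommGroup E]

theorem norm_midpoint_lt_max [NormedSpace ℝ E] [StrictConvexSpace ℝ E] {x y : E} (h : x ≠ y) :
    ‖midpoint ℝ x y‖ < max ‖x‖ ‖y‖ := by
  rw [midpoint_eq_smul_add, smul_add]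
  exact norm_combo_lt_of_ne (le_max_left _ _) (le_max_right _ _) h (by norm_num) (by norm_num)
    (by norm_num)

structure IsStrictInterpolant (u v w : X → E) : Prop where
  eq_of_eq : ∀ x, v x = u x → w x = u x
  norm_sub_lt_max : ∀ x z, u x - u z ≠ v x - v z →
    ‖w x - w z‖ < max ‖u x - u z‖ ‖v x - v z‖
  norm_sub_le : ∀ x z, u x - u z = v x - v z → ‖w x - w z‖ ≤ ‖u x - u z‖
  norm_sub_lt : ∀ x z, u x - u z = v x - v z → v x ≠ u x → u x ≠ u z →
    ‖w x - w z‖ < ‖u x - u z‖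

namespace IsStrictInterpolant

variable {u v w : X → E} {x z : X}

theorem norm_sub_le_max (hw : IsStrictInterpolant u v w) (x z : X) :
    ‖w x - w z‖ ≤ max ‖u x - u z‖ ‖v x - v z‖ := by
  by_cases h : u x - u z = v x - v z
  · exact (hw.norm_sub_le x z h).trans (le_max_left _ _)
  · exact (hw.norm_sub_lt_max x z h).le

theorem norm_sub_lt_right_of_lt (hw : IsStrictInterpolant u v w)
    (h : ‖u x - u z‖ < ‖w x - w z‖) : ‖w x - w z‖ < ‖v x - v z‖ := by
  by_cases heq : u x - u z = v x - v z
  · exact absurd (hw.norm_sub_le x z heq) h.not_ge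
  · exact (lt_max_iff.mp (hw.norm_sub_lt_max x z heq)).resolve_left h.not_gt

theorem norm_sub_lt_of_norm_lt (hw : IsStrictInterpolant u v w)
    (h : ‖v x - v z‖ < ‖u x - u z‖) : ‖w x - w z‖ < ‖u x - u z‖ := by
  have hne : u x - u z ≠ v x - v z := fun heq => h.ne (by rw [heq])
  simpa [max_eq_left h.le] using hw.norm_sub_lt_max x z hne

theorem norm_sub_lt_of_norm_le (hw : IsStrictInterpolant u v w) {c : ℝ} (hx : v x ≠ u x)
    (hvu : ‖v x - v z‖ ≤ ‖u x - u z‖) (hc : ‖u x - u z‖ ≤ c) (hc₀ : 0 < c) :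
    ‖w x - w z‖ < c := by
  rcases eq_or_ne (u x) (u z) with hxz | hxz
  · refine (hw.norm_sub_le_max x z).trans_lt ?_
    rwa [max_eq_left hvu, hxz, sub_self, norm_zero]
  refine lt_of_lt_of_le ?_ hc
  by_cases heq : u x - u z = v x - v z
  · exact hw.norm_sub_lt x z heq hx hxz
  · simpa [max_eq_left hvu] using hw.norm_sub_lt_max x z heq

end IsStrictInterpolant

variable [NormedSpace ℝ E]

open Classical in
noncomputable def shrunkMidpoint (u v : X → E) (ε : ℝ) (x : X) : E :=
  if v x = u x then u x else (1 - ε) • midpoint ℝ (u x) (v x)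

variable {u v : X → E} {ε : ℝ} {x z : X}

theorem shrunkMidpoint_zero : shrunkMidpoint u v 0 x = midpoint ℝ (u x) (v x) := by
  unfold shrunkMidpoint
  split_ifs with h <;> simp [h]

theorem continuous_shrunkMidpoint : Continuous fun ε => shrunkMidpoint u v ε x := by
  unfold shrunkMidpoint
  split_ifs <;> fun_prop

open Classical in
theorem shrunkMidpoint_sub_of_sub_eq (h : u x - u z = v x - v z) :
    shrunkMidpoint u v ε x - shrunkMidpoint u v ε z =
      if v x = u x then u x - u z else (1 - ε) • (u x - u z) := by
  have hzx : v z = u z ↔ v x = u x := by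
    rw [← sub_eq_zero, ← sub_eq_sub_iff_sub_eq_sub.mpr h.symm, sub_eq_zero]
  unfold shrunkMidpoint
  split_ifs with hx hz hz
  · rfl
  · exact absurd (hzx.mpr hx) hz
  · exact absurd (hzx.mp hz) hx
  · rw [← smul_sub, ← vsub_eq_sub (midpoint ℝ _ _), midpoint_vsub_midpoint, vsub_eq_sub,
      vsub_eq_sub, ← h, midpoint_self]

theorem exists_isStrictInterpolant [Finite X] [StrictConvexSpace ℝ E] (u v : X → E) :
    ∃ w, IsStrictInterpolant u v w := by
  have hsmall : ∀ᶠ ε in 𝓝 (0 : ℝ), ∀ x z, u x - u z ≠ v x - v z →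
      ‖shrunkMidpoint u v ε x - shrunkMidpoint u v ε z‖ < max ‖u x - u z‖ ‖v x - v z‖ := by
    simp only [eventually_all]
    intro x z hne
    refine ContinuousAt.eventually_lt
      (continuous_shrunkMidpoint.sub continuous_shrunkMidpoint).norm.continuousAt
      continuousAt_const ?_
    rw [shrunkMidpoint_zero, shrunkMidpoint_zero, ← vsub_eq_sub, midpoint_vsub_midpoint]
    exact norm_midpoint_lt_max hne
  obtain ⟨ε, hε, hε₀, hε₁⟩ :=
    ((hsmall.filter_mono nhdsWithin_le_nhds).and (Ioo_mem_nhdsGT one_pos)).exists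
  refine ⟨shrunkMidpoint u v ε, fun x hx => by simp [shrunkMidpoint, hx], hε, fun x z h => ?_,
    fun x z h hx hxz => ?_⟩
  · rw [shrunkMidpoint_sub_of_sub_eq h]
    split_ifs
    · rfl
    · rw [norm_smul, Real.norm_of_nonneg (by linarith)]
      exact mul_le_of_le_one_left (norm_nonneg _) (by linarith)
  · rw [shrunkMidpoint_sub_of_sub_eq h, if_neg hx, norm_smul, Real.norm_of_nonneg (by linarith)]
    exact mul_lt_of_lt_one_left (norm_pos_iff.mpr (sub_ne_zero.mpr hxz)) (by linarith)

end Interpolant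

theorem finite_setOf_exists_apply_eq {α : Type*} [Finite α] (p q : α → Prop) (f : α → ℝ) :
    {d : ℝ | ∃ a, p a ∧ f a = d ∧ q a}.Finite :=
  (Set.finite_range f).subset fun _ ⟨a, _, ha, _⟩ => ⟨a, ha⟩

theorem finite_setOf_exists₂_apply_eq {α : Type*} [Finite α] (p q r : α → α → Prop)
    (f : α → α → ℝ) : {d : ℝ | ∃ a b, p a b ∧ q a b ∧ f a b = d ∧ r a b}.Finite :=
  (Set.finite_range fun e : α × α => f e.1 e.2).subset fun _ ⟨a, b, _, _, h, _⟩ => ⟨(a, b), h⟩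

theorem sSup_mem_of_sSup_lt {A B : Set ℝ} (hA : A.Finite) (hB : ∀ b ∈ B, 0 ≤ b)
    (h : sSup B < sSup A) : sSup A ∈ A := by
  refine (Set.nonempty_iff_ne_empty.mpr fun hA₀ => ?_).csSup_mem hA
  rw [hA₀, Real.sSup_empty] at h
  exact (Real.sSup_nonneg hB).not_gt h

theorem sSup_lt_sSup_of_forall_exists_lt {A B : Set ℝ} (hA : BddAbove A) (hB : B.Finite)
    (hpos : ∃ a ∈ A, 0 < a) (h : ∀ b ∈ B, ∃ a ∈ A, b < a) : sSup B < sSup A := by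
  obtain ⟨a, ha, hlt⟩ : ∃ a ∈ A, sSup B < a := by
    rcases B.eq_empty_or_nonempty with rfl | hne
    · simpa using hpos
    · exact h _ (hne.csSup_mem hB)
  exact hlt.trans_le (le_csSup hA ha)

theorem ne_or_ne_of_sub_ne {α G : Type*} [AddGroup G] {u v : α → G} {x y : α}
    (h : u x - u y ≠ v x - v y) : v x ≠ u x ∨ v y ≠ u y := by
  contrapose! h
  rw [h.1, h.2]

section Sloc

variable {X : Type*} {m : ℕ} {G : SimpleGraph X} {f : X → EuclideanSpace ℝ (Fin m)} {x z : X}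

theorem Sloc_nonneg_s4 : 0 ≤ Sloc G f x :=
  Real.sSup_nonneg (by rintro _ ⟨y, -, rfl⟩; exact norm_nonneg _)

variable [Finite X]

theorem finite_Sloc_set : {d : ℝ | ∃ y, G.Adj x y ∧ d = ‖f y - f x‖}.Finite :=
  (Set.finite_range fun y => ‖f y - f x‖).subset fun _ ⟨y, _, hy⟩ => ⟨y, hy.symm⟩

theorem norm_sub_le_Sloc (h : G.Adj x z) : ‖f x - f z‖ ≤ Sloc G f x := by
  rw [norm_sub_rev]
  exact le_csSup finite_Sloc_set.bddAbove ⟨z, h, rfl⟩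

theorem exists_adj_norm_sub_eq_Sloc (h : 0 < Sloc G f x) :
    ∃ z, G.Adj x z ∧ ‖f x - f z‖ = Sloc G f x := by
  have hne : {d : ℝ | ∃ y, G.Adj x y ∧ d = ‖f y - f x‖}.Nonempty := by
    refine Set.nonempty_iff_ne_empty.mpr fun h₀ => h.ne' ?_
    rw [Sloc, h₀, Real.sSup_empty]
  obtain ⟨z, hz, heq⟩ := hne.csSup_mem finite_Sloc_set
  exact ⟨z, hz, by rw [norm_sub_rev, Sloc, heq]⟩

theorem Sloc_lt {c : ℝ} (hc : 0 < c) (h : ∀ z, G.Adj x z → ‖f x - f z‖ < c) :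
    Sloc G f x < c := by
  rcases (Sloc_nonneg_s4 : 0 ≤ Sloc G f x).lt_or_eq with hpos | hzero
  · obtain ⟨z, hz, heq⟩ := exists_adj_norm_sub_eq_Sloc hpos
    exact heq ▸ h z hz
  · exact hzero ▸ hc

theorem exists_and_norm_sub_le_Sloc {p : X → Prop} (h : G.Adj x z) (hp : p x ∨ p z) :
    ∃ c, p c ∧ ‖f x - f z‖ ≤ Sloc G f c := by
  rcases hp with hx | hz
  · exact ⟨x, hx, norm_sub_le_Sloc h⟩
  · exact ⟨z, hz, by rw [norm_sub_rev]; exact norm_sub_le_Sloc h.symm⟩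

end Sloc

section Comparison

variable {X : Type*} [Finite X] {m : ℕ} {G : SimpleGraph X} {Y : Set X}
  {u v : X → EuclideanSpace ℝ (Fin m)}

theorem exists_tighter_of_edgeTighter (h : EdgeTighter G Y v u) : ∃ w, Tighter G Y w u := by
  obtain ⟨hvY, hlt⟩ := h
  obtain ⟨a₀, b₀, hab₀, -, hut, hvu⟩ := sSup_mem_of_sSup_lt
    (finite_setOf_exists₂_apply_eq (α := X) _ _ _ _)
    (by rintro _ ⟨x, y, -, -, rfl, -⟩; positivity) hlt
  set s := sSup {d : ℝ | ∃ x y, G.Adj x y ∧ ¬(x ∈ Y ∧ y ∈ Y) ∧ ‖v x - v y‖ = d ∧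
    ‖u x - u y‖ < ‖v x - v y‖}
  set t := sSup {d : ℝ | ∃ x y, G.Adj x y ∧ ¬(x ∈ Y ∧ y ∈ Y) ∧ ‖u x - u y‖ = d ∧
    ‖v x - v y‖ < ‖u x - u y‖}
  have hs : ∀ x y, G.Adj x y → x ∉ Y → ‖u x - u y‖ < ‖v x - v y‖ → ‖v x - v y‖ ≤ s :=
    fun x y hxy hx huv => le_csSup (finite_setOf_exists₂_apply_eq (α := X) _ _ _ _).bddAbove
      ⟨x, y, hxy, fun h => hx h.1, rfl, huv⟩
  have ht₀ : 0 < t := hut ▸ (norm_nonneg _).trans_lt hvu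
  obtain ⟨a, ha, hta⟩ : ∃ a, v a ≠ u a ∧ t ≤ Sloc G u a :=
    hut ▸ exists_and_norm_sub_le_Sloc hab₀
      (ne_or_ne_of_sub_ne fun h => hvu.ne (by rw [h]))
  have haY : a ∉ Y := fun h => ha (hvY a h)
  obtain ⟨w, hw⟩ := exists_isStrictInterpolant u v
  have hwa : Sloc G w a < Sloc G u a := by
    refine Sloc_lt (ht₀.trans_le hta) fun z hz => ?_
    rcases lt_or_ge ‖u a - u z‖ ‖v a - v z‖ with huv | hle
    · calc ‖w a - w z‖ ≤ max ‖u a - u z‖ ‖v a - v z‖ := hw.norm_sub_le_max a z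
        _ = ‖v a - v z‖ := max_eq_right huv.le
        _ ≤ s := hs a z hz haY huv
        _ < Sloc G u a := hlt.trans_le hta
    · exact hw.norm_sub_lt_of_norm_le ha hle (norm_sub_le_Sloc hz) (ht₀.trans_le hta)
  refine ⟨w, fun y hy => hw.eq_of_eq y (hvY y hy), sSup_lt_sSup_of_forall_exists_lt
    (finite_setOf_exists_apply_eq _ _ _).bddAbove (finite_setOf_exists_apply_eq _ _ _)
    ⟨_, ⟨a, haY, rfl, hwa⟩, ht₀.trans_le hta⟩ ?_⟩
  rintro _ ⟨x, hxY, rfl, hux⟩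
  refine ⟨_, ⟨a, haY, rfl, hwa⟩, ?_⟩
  obtain ⟨z, hz, hwz⟩ := exists_adj_norm_sub_eq_Sloc (Sloc_nonneg_s4.trans_lt hux)
  have huw : ‖u x - u z‖ < ‖w x - w z‖ := (norm_sub_le_Sloc hz).trans_lt (hwz ▸ hux)
  have hwv := hw.norm_sub_lt_right_of_lt huw
  calc Sloc G w x = ‖w x - w z‖ := hwz.symm
    _ < ‖v x - v z‖ := hwv
    _ ≤ s := hs x z hz hxY (huw.trans hwv)
    _ < Sloc G u a := hlt.trans_le hta

theorem exists_edgeTighter_of_tighter (h : Tighter G Y v u) : ∃ w, EdgeTighter G Y w u := by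
  obtain ⟨hvY, hlt⟩ := h
  obtain ⟨a, haY, hua, hva⟩ := sSup_mem_of_sSup_lt
    (finite_setOf_exists_apply_eq (α := X) _ _ _) (by rintro _ ⟨x, -, rfl, -⟩; exact Sloc_nonneg_s4)
    hlt
  set s := sSup {d : ℝ | ∃ x, x ∉ Y ∧ Sloc G v x = d ∧ Sloc G u x < Sloc G v x}
  set t := sSup {d : ℝ | ∃ x, x ∉ Y ∧ Sloc G u x = d ∧ Sloc G v x < Sloc G u x}
  have hs : ∀ x, x ∉ Y → Sloc G u x < Sloc G v x → Sloc G v x ≤ s := fun x hx huv =>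
    le_csSup (finite_setOf_exists_apply_eq (α := X) _ _ _).bddAbove ⟨x, hx, rfl, huv⟩
  have hs₀ : 0 ≤ s := Real.sSup_nonneg (by rintro _ ⟨x, -, rfl, -⟩; exact Sloc_nonneg_s4)
  obtain ⟨b, hab, hub⟩ := exists_adj_norm_sub_eq_Sloc (f := u) (hua ▸ hs₀.trans_lt hlt)
  obtain ⟨w, hw⟩ := exists_isStrictInterpolant u v
  have hvab : ‖v a - v b‖ < ‖u a - u b‖ := (norm_sub_le_Sloc hab).trans_lt (hub ▸ hva)
  set A := {d : ℝ | ∃ x y, G.Adj x y ∧ ¬(x ∈ Y ∧ y ∈ Y) ∧ ‖u x - u y‖ = d ∧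
    ‖w x - w y‖ < ‖u x - u y‖}
  have htA : t ∈ A := ⟨a, b, hab, fun h => haY h.1, hub.trans hua, hw.norm_sub_lt_of_norm_lt hvab⟩
  refine ⟨w, fun y hy => hw.eq_of_eq y (hvY y hy), sSup_lt_sSup_of_forall_exists_lt
    (finite_setOf_exists₂_apply_eq _ _ _ _).bddAbove (finite_setOf_exists₂_apply_eq _ _ _ _)
    ⟨t, htA, hs₀.trans_lt hlt⟩ ?_⟩
  rintro _ ⟨x, y, hxy, -, rfl, huw⟩
  have hwv := hw.norm_sub_lt_right_of_lt huw
  obtain ⟨c, hc, hvc⟩ := exists_and_norm_sub_le_Sloc (p := fun c => v c ≠ u c) hxy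
    (ne_or_ne_of_sub_ne fun h => (huw.trans hwv).ne (by rw [h]))
  rcases le_or_gt (Sloc G v c) s with hcs | hcs
  · exact ⟨t, htA, hwv.trans_le (hvc.trans (hcs.trans_lt hlt).le)⟩
  have hvuc : Sloc G v c ≤ Sloc G u c :=
    not_lt.mp fun huv => hcs.not_ge (hs c (fun h => hc (hvY c h)) huv)
  obtain ⟨z, hz, huz⟩ := exists_adj_norm_sub_eq_Sloc (hs₀.trans_lt (hcs.trans_le hvuc))
  refine ⟨_, ⟨c, z, hz, fun h => hc (hvY c h.1), rfl, ?_⟩, ?_⟩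
  · exact hw.norm_sub_lt_of_norm_le hc ((norm_sub_le_Sloc hz).trans (huz ▸ hvuc)) le_rfl
      (huz ▸ hs₀.trans_lt (hcs.trans_le hvuc))
  · exact hwv.trans_le (hvc.trans (huz ▸ hvuc))

end Comparison

theorem stmt4_general {X : Type*} [Fintype X] {m : ℕ} (G : SimpleGraph X) (Y : Set X)
    (u : X → EuclideanSpace ℝ (Fin m)) :
    Tight G Y u ↔ EdgeTight G Y u :=
  not_congr ⟨fun ⟨_, hv⟩ => exists_edgeTighter_of_tighter hv,
    fun ⟨_, hv⟩ => exists_tighter_of_edgeTighter hv⟩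

theorem stmt4 {X : Type*} [Fintype X] {m : ℕ} (G : SimpleGraph X)
    (hconn : G.Connected) (Y : Set X) (hY : Y.Nonempty)
    (u : X → EuclideanSpace ℝ (Fin m)) :
    Tight G Y u ↔ EdgeTight G Y u :=
  stmt4_general G Y u
end

section
/- Define sequences r_0 = 1, ε_0 = 1/4, r_{i+1} = (r_i² + (ε_i/2)²)^{1/2}, ε_{i+1} = 2(r_i − (r_i² − ε_i²)^{1/2}). Then (i) r_i is increasing; (ii) ε_{i+1} ≤ 2 ε_i² for all i; (iii) ε_i → 0 and Σ_i ε_i < ∞; (iv) r_i converges to a finite limit. -/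
/-!
Since `r - √(r² - ε²) = ε² / (r + √(r² - ε²))` and the radii stay `≥ 1`, each new gap is at most
twice the square of the old one; as `ε₀ = 1/4` this gives `ε_{i+1} ≤ ε_i / 2`, so the gaps decay
geometrically. The radii increase by at most `ε_i` per step, so they form a Cauchy sequence.
-/

open Real

lemma le_sqrt_sq_add_sq (r x : ℝ) : r ≤ √(r ^ 2 + x ^ 2) :=
  calc r ≤ |r| := le_abs_self r
    _ = √(r ^ 2) := (sqrt_sq_eq_abs r).symm
    _ ≤ √(r ^ 2 + x ^ 2) := sqrt_le_sqrt (by nlinarith)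

lemma lt_sqrt_sq_add_sq {r x : ℝ} (hr : 0 ≤ r) (hx : x ≠ 0) : r < √(r ^ 2 + x ^ 2) :=
  (lt_sqrt hr).2 (lt_add_of_pos_right _ (sq_pos_of_ne_zero hx))

lemma sqrt_sq_add_sq_half_le_add {r ε : ℝ} (hr : 0 ≤ r) (hε : 0 ≤ ε) :
    √(r ^ 2 + (ε / 2) ^ 2) ≤ r + ε :=
  (sqrt_le_left (by positivity)).2 (by nlinarith)

lemma sub_sqrt_sq_sub_sq_pos {r ε : ℝ} (hr : 0 < r) (hε : ε ≠ 0) : 0 < r - √(r ^ 2 - ε ^ 2) :=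
  sub_pos.2 ((sqrt_lt' hr).2 (sub_lt_self _ (sq_pos_of_ne_zero hε)))

/-- If `ε² ≤ r²` then `(r - s)(r + s) = ε²` with `s = √(r² - ε²)` and `r + s ≥ 1`;
otherwise the square root is the junk value `0` and `r ≤ r² < ε²`. -/
lemma sub_sqrt_sq_sub_sq_le_sq {r ε : ℝ} (hr : 1 ≤ r) : r - √(r ^ 2 - ε ^ 2) ≤ ε ^ 2 := by
  rcases le_or_gt (ε ^ 2) (r ^ 2) with h | h
  · have hs := sq_sqrt (sub_nonneg.2 h)
    nlinarith [sqrt_nonneg (r ^ 2 - ε ^ 2)]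
  · rw [sqrt_eq_zero'.2 (by linarith)]
    nlinarith

section

variable {r ε : ℕ → ℝ}

lemma monotone_radius (hr : ∀ i, r (i+1) = √((r i)^2 + (ε i / 2)^2)) : Monotone r :=
  monotone_nat_of_le_succ fun i => (hr i).symm ▸ le_sqrt_sq_add_sq _ _

lemma one_le_radius (hr0 : r 0 = 1) (hr : ∀ i, r (i+1) = √((r i)^2 + (ε i / 2)^2)) (i : ℕ) :
    1 ≤ r i :=
  hr0 ▸ monotone_radius hr (Nat.zero_le i)

lemma gap_succ_le_two_mul_sq (hr0 : r 0 = 1) (hr : ∀ i, r (i+1) = √((r i)^2 + (ε i / 2)^2))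
    (he : ∀ i, ε (i+1) = 2 * (r i - √((r i)^2 - (ε i)^2))) (i : ℕ) :
    ε (i+1) ≤ 2 * (ε i)^2 := by
  rw [he i]
  linarith [sub_sqrt_sq_sub_sq_le_sq (ε := ε i) (one_le_radius hr0 hr i)]

lemma gap_pos (hr0 : r 0 = 1) (he0 : ε 0 = 1/4)
    (hr : ∀ i, r (i+1) = √((r i)^2 + (ε i / 2)^2))
    (he : ∀ i, ε (i+1) = 2 * (r i - √((r i)^2 - (ε i)^2))) (i : ℕ) : 0 < ε i := by
  induction i with
  | zero => rw [he0]; norm_num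
  | succ i ih =>
    rw [he i]
    have := sub_sqrt_sq_sub_sq_pos (r := r i) (by linarith [one_le_radius hr0 hr i]) ih.ne'
    linarith

lemma gap_le_geometric (hr0 : r 0 = 1) (he0 : ε 0 = 1/4)
    (hr : ∀ i, r (i+1) = √((r i)^2 + (ε i / 2)^2))
    (he : ∀ i, ε (i+1) = 2 * (r i - √((r i)^2 - (ε i)^2))) (i : ℕ) :
    ε i ≤ 1/4 * (1/2)^i := by
  induction i with
  | zero => rw [he0]; norm_num
  | succ i ih =>
    have hpos := gap_pos hr0 he0 hr he i
    have hquarter : ε i ≤ 1/4 := ih.trans (by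
      have : (1/2 : ℝ)^i ≤ 1 := pow_le_one₀ (by norm_num) (by norm_num)
      linarith)
    calc ε (i+1) ≤ 2 * (ε i)^2 := gap_succ_le_two_mul_sq hr0 hr he i
      _ ≤ ε i / 2 := by nlinarith
      _ ≤ 1/4 * (1/2)^(i+1) := by rw [pow_succ]; linarith

end

theorem stmt6 (r ε : ℕ → ℝ) (hr0 : r 0 = 1) (he0 : ε 0 = 1/4)
    (hr : ∀ i, r (i+1) = Real.sqrt ((r i)^2 + (ε i / 2)^2))
    (he : ∀ i, ε (i+1) = 2 * (r i - Real.sqrt ((r i)^2 - (ε i)^2))) :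
    StrictMono r ∧
    (∀ i, ε (i+1) ≤ 2 * (ε i)^2) ∧
    Filter.Tendsto ε Filter.atTop (nhds 0) ∧
    Summable ε ∧
    ∃ L : ℝ, Filter.Tendsto r Filter.atTop (nhds L) := by
  have hpos := gap_pos hr0 he0 hr he
  have hone := one_le_radius hr0 hr
  have hgeom_sum : Summable fun i : ℕ => 1/4 * (1/2 : ℝ)^i :=
    (summable_geometric_of_lt_one (by norm_num) (by norm_num)).mul_left _
  have hsum : Summable ε :=
    hgeom_sum.of_nonneg_of_le (fun i => (hpos i).le) (gap_le_geometric hr0 he0 hr he)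
  have hmono : StrictMono r := strictMono_nat_of_lt_succ fun i =>
    (hr i).symm ▸ lt_sqrt_sq_add_sq (by linarith [hone i]) (half_pos (hpos i)).ne'
  have hstep : ∀ i, dist (r i) (r (i+1)) ≤ ε i := fun i => by
    rw [Real.dist_eq, abs_sub_comm, abs_of_pos (sub_pos.2 (hmono i.lt_succ_self)), hr i]
    linarith [sqrt_sq_add_sq_half_le_add (r := r i) (by linarith [hone i]) (hpos i).le]
  exact ⟨hmono, gap_succ_le_two_mul_sq hr0 hr he, hsum.tendsto_atTop_zero, hsum,
    cauchySeq_tendsto_of_complete (cauchySeq_of_dist_le_of_summable ε hstep hsum)⟩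
end

section
/- For an m × n real matrix A with λ₁(AᵗA) > λ₂(AᵗA), let a be a unit vector spanning the principal eigenspace of AᵗA. Then for any m × n matrix B, the map s ↦ |A + sB|² (operator norm squared) is differentiable at s = 0 with derivative 2(Aa)ᵗ(Ba); i.e., |A + sB|² = |A|² + 2s (Aa)ᵗ(Ba) + O(s²). -/
/-!
With `T`, `U` the operators of `A`, `B`, testing `T + sU` on the unit eigenvector `a` gives
`‖T + sU‖² ≥ ‖T‖² + 2s⟪Ta, Ua⟫ + s²‖Ua‖²`. Testing it on a unit vector `vₛ` where its norm is
attained gives `‖T + sU‖² ≤ ‖T‖² + 2s⟪Tvₛ, Uvₛ⟫ + s²‖U‖²`. Since `‖Tvₛ‖ ≥ ‖T‖ - |s|‖U‖`, the `vₛ`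
maximize `‖T ·‖` on the unit sphere in the limit; simplicity of the top eigenvalue of `T†T` makes
`±a` the only exact maximizers, so by compactness of the sphere `⟪Tvₛ, Uvₛ⟫ → ⟪Ta, Ua⟫`, and both
bounds are `‖T‖² + 2s⟪Ta, Ua⟫ + o(s)`.
-/

open Matrix

/-- The operator norm of an `m × n` real matrix, `|A| = max_{|a|=1} |Aa|`
(Euclidean norms on domain and codomain). -/
noncomputable def opN {m n : ℕ} (A : Matrix (Fin m) (Fin n) ℝ) : ℝ :=
  ‖LinearMap.toContinuousLinearMap (Matrix.toEuclideanLin A)‖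

open scoped RealInnerProductSpace InnerProduct
open Filter Topology

theorem IsCompact.tendsto_of_tendsto_max {X ι : Type*} [TopologicalSpace X] {K : Set X}
    (hK : IsCompact K) {f φ : X → ℝ} (hf : Continuous f) (hφ : Continuous φ) {M c : ℝ}
    (hfM : ∀ x ∈ K, f x ≤ M) (hφc : ∀ x ∈ K, f x = M → φ x = c) {l : Filter ι} {x : ι → X}
    (hx : ∀ i, x i ∈ K) (hfx : Tendsto (f ∘ x) l (𝓝 M)) : Tendsto (φ ∘ x) l (𝓝 c) := by
  rw [Metric.tendsto_nhds]
  intro ε hε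
  have hK' : IsCompact (K ∩ {y | ε ≤ dist (φ y) c}) :=
    hK.inter_right (isClosed_le continuous_const (hφ.dist continuous_const))
  have hlt : ∀ y ∈ K ∩ {y | ε ≤ dist (φ y) c}, 0 < M - f y :=
      fun y ⟨hyK, (hy : ε ≤ dist (φ y) c)⟩ ↦ by
    refine sub_pos.2 ((hfM y hyK).lt_of_ne fun hyM ↦ ?_)
    rw [hφc y hyK hyM, dist_self] at hy
    exact hy.not_gt hε
  obtain ⟨η, hη, hfη⟩ := hK'.exists_forall_le' (f := fun y ↦ M - f y)
    (continuousOn_const.sub hf.continuousOn) hlt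
  filter_upwards [Metric.tendsto_nhds.1 hfx η hη] with i hi
  by_contra! h
  have := hfη (x i) ⟨hx i, h⟩
  rw [Function.comp_apply, Real.dist_eq, abs_lt] at hi
  linarith

theorem hasDerivAt_zero_of_remainder_le {f g : ℝ → ℝ} {d : ℝ} (hg : Tendsto g (𝓝 0) (𝓝 0))
    (hf : ∀ s, 0 ≤ f s - f 0 - s * d ∧ f s - f 0 - s * d ≤ |s| * g s) : HasDerivAt f d 0 := by
  rw [hasDerivAt_iff_isLittleO, Asymptotics.isLittleO_iff]
  intro ε hε
  filter_upwards [hg.eventually (gt_mem_nhds hε)] with s hs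
  obtain ⟨h₀, h₁⟩ := hf s
  simp only [sub_zero, smul_eq_mul, Real.norm_eq_abs, mul_comm s d]
  rw [abs_of_nonneg (mul_comm s d ▸ h₀)]
  nlinarith [abs_nonneg s]

namespace ContinuousLinearMap

variable {E F : Type*} [NormedAddCommGroup E] [InnerProductSpace ℝ E]
  [NormedAddCommGroup F] [InnerProductSpace ℝ F]

theorem exists_norm_apply_eq_norm [ProperSpace E] [Nontrivial E] (T : E →L[ℝ] F) :
    ∃ v, ‖v‖ = 1 ∧ ‖T v‖ = ‖T‖ := by
  have hK := (isCompact_sphere (0 : E) 1).image (f := fun x ↦ ‖T x‖) T.continuous.norm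
  obtain ⟨v, hv, hTv⟩ := hK.sSup_mem ((NormedSpace.sphere_nonempty.2 zero_le_one).image _)
  exact ⟨v, mem_sphere_zero_iff_norm.1 hv, hTv.trans T.sSup_sphere_eq_norm⟩

theorem norm_add_smul_apply_sq (T U : E →L[ℝ] F) (s : ℝ) (x : E) :
    ‖(T + s • U) x‖ ^ 2 = ‖T x‖ ^ 2 + 2 * s * ⟪T x, U x⟫ + s ^ 2 * ‖U x‖ ^ 2 := by
  rw [_root_.add_apply, _root_.smul_apply, norm_add_sq_real, real_inner_smul_right, norm_smul,
    mul_pow, Real.norm_eq_abs, sq_abs]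
  ring

theorem tendsto_norm_apply_of_norm_add_smul_apply_eq (T U : E →L[ℝ] F) {v : ℝ → E}
    (hv : ∀ s, ‖v s‖ = 1) (hTv : ∀ s, ‖(T + s • U) (v s)‖ = ‖T + s • U‖) :
    Tendsto (fun s ↦ ‖T (v s)‖) (𝓝 0) (𝓝 ‖T‖) := by
  refine tendsto_of_tendsto_of_tendsto_of_le_of_le (g := fun s ↦ ‖T + s • U‖ - |s| * ‖U‖)
    ?_ tendsto_const_nhds (fun s ↦ ?_) (fun s ↦ T.unit_le_opNorm _ (hv s).le)
  · have hc : Continuous fun s : ℝ ↦ ‖T + s • U‖ - |s| * ‖U‖ := by fun_prop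
    simpa using hc.tendsto 0
  · have hle := norm_add_le (T (v s)) ((s • U) (v s))
    rw [← _root_.add_apply, hTv s, _root_.smul_apply, norm_smul, Real.norm_eq_abs] at hle
    have hU := mul_le_mul_of_nonneg_left (U.unit_le_opNorm _ (hv s).le) (abs_nonneg s)
    dsimp only
    linarith

theorem hasDerivAt_norm_add_smul_sq [FiniteDimensional ℝ E] (T U : E →L[ℝ] F) {a : E}
    (ha : ‖a‖ = 1) (hTa : ‖T a‖ = ‖T‖)
    (hmax : ∀ v, ‖v‖ = 1 → ‖T v‖ = ‖T‖ → v = a ∨ v = -a) :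
    HasDerivAt (fun s : ℝ ↦ ‖T + s • U‖ ^ 2) (2 * ⟪T a, U a⟫) 0 := by
  have : Nontrivial E := ⟨a, 0, ne_zero_of_norm_ne_zero (ha ▸ one_ne_zero)⟩
  choose v hv hTv using fun s : ℝ ↦ (T + s • U).exists_norm_apply_eq_norm
  set φ : E → ℝ := fun x ↦ ⟪T x, U x⟫
  have hφ : Tendsto (φ ∘ v) (𝓝 0) (𝓝 (φ a)) := by
    refine (isCompact_sphere (0 : E) 1).tendsto_of_tendsto_max T.continuous.norm
      (T.continuous.inner U.continuous) (fun x hx ↦ T.unit_le_opNorm x (by simp_all))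
      (fun x hx hTx ↦ ?_) (fun s ↦ by simp [hv s])
      (T.tendsto_norm_apply_of_norm_add_smul_apply_eq U hv hTv)
    rcases hmax x (by simpa using hx) hTx with rfl | rfl
    · rfl
    · simp [φ]
  have hg : Tendsto (fun s ↦ 2 * |φ (v s) - φ a| + |s| * ‖U‖ ^ 2) (𝓝 0) (𝓝 0) := by
    simpa using ((hφ.sub_const (φ a)).abs.const_mul 2).add
      ((continuous_abs.tendsto (0 : ℝ)).mul_const (‖U‖ ^ 2))
  refine hasDerivAt_zero_of_remainder_le hg fun s ↦ ⟨?_, ?_⟩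
  · have h := pow_le_pow_left₀ (norm_nonneg _) ((T + s • U).unit_le_opNorm a ha.le) 2
    rw [norm_add_smul_apply_sq, hTa] at h
    simp only [zero_smul, add_zero]
    nlinarith [sq_nonneg (s * ‖U a‖)]
  · have hT := pow_le_pow_left₀ (norm_nonneg _) (T.unit_le_opNorm _ (hv s).le) 2
    have hU := pow_le_pow_left₀ (norm_nonneg _) (U.unit_le_opNorm _ (hv s).le) 2
    have hlin : s * (φ (v s) - φ a) ≤ |s| * |φ (v s) - φ a| := abs_mul s _ ▸ le_abs_self _
    have hsq : s ^ 2 = |s| * |s| := by rw [← sq, sq_abs]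
    rw [← hTv s, norm_add_smul_apply_sq]
    simp only [zero_smul, add_zero]
    nlinarith [sq_nonneg s]

variable [CompleteSpace E] [CompleteSpace F]

theorem adjoint_comp_self_apply_eq_of_norm_apply_eq (T : E →L[ℝ] F) {v : E} (hv : ‖v‖ = 1)
    (hTv : ‖T v‖ = ‖T‖) : (T† ∘L T) v = ‖T‖ ^ 2 • v := by
  set x := (T† ∘L T) v
  have hxv : ⟪x, v⟫ = ‖T‖ ^ 2 := by rw [← hTv, apply_norm_sq_eq_inner_adjoint_left]; rfl
  have hx : ‖x‖ = ‖T‖ ^ 2 := by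
    refine le_antisymm ?_ ?_
    · exact ((T† ∘L T).unit_le_opNorm v hv.le).trans_eq (by rw [norm_adjoint_comp_self, sq])
    · simpa [hxv, hv] using real_inner_le_norm x v
  have := inner_eq_norm_mul_iff_real.1 (by rw [hxv, hx, hv, mul_one])
  rwa [hv, one_smul, hx] at this

theorem norm_apply_eq_of_adjoint_comp_self_apply_eq (T : E →L[ℝ] F) {a : E} (ha : ‖a‖ = 1)
    (h : (T† ∘L T) a = ‖T‖ ^ 2 • a) : ‖T a‖ = ‖T‖ := by
  have : ‖T a‖ ^ 2 = ‖T‖ ^ 2 := by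
    rw [apply_norm_sq_eq_inner_adjoint_left, h, RCLike.re_to_real, real_inner_smul_left,
      real_inner_self_eq_norm_sq, ha, one_pow, mul_one]
  exact (pow_left_inj₀ (norm_nonneg _) (norm_nonneg _) two_ne_zero).1 this

theorem eq_or_eq_neg_of_norm_apply_eq (T : E →L[ℝ] F) {a : E} (ha : ‖a‖ = 1)
    (hsimple : ∀ w, w ≠ 0 → (T† ∘L T) w = ‖T‖ ^ 2 • w → ∃ c : ℝ, w = c • a) {v : E}
    (hv : ‖v‖ = 1) (hTv : ‖T v‖ = ‖T‖) : v = a ∨ v = -a := by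
  obtain ⟨c, rfl⟩ := hsimple v (ne_zero_of_norm_ne_zero (hv ▸ one_ne_zero))
    (T.adjoint_comp_self_apply_eq_of_norm_apply_eq hv hTv)
  rw [norm_smul, ha, mul_one, Real.norm_eq_abs] at hv
  rcases abs_eq_abs.1 (hv.trans abs_one.symm) with rfl | rfl <;> simp

end ContinuousLinearMap

namespace Matrix

variable {m n : Type*} [Fintype m] [Fintype n] [DecidableEq n]

noncomputable def toEuclideanCLM' :
    Matrix m n ℝ ≃ₗ[ℝ] (EuclideanSpace ℝ n →L[ℝ] EuclideanSpace ℝ m) :=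
  toEuclideanLin.trans LinearMap.toContinuousLinearMap

theorem toEuclideanCLM'_toLp (A : Matrix m n ℝ) (x : n → ℝ) :
    toEuclideanCLM' A (WithLp.toLp 2 x) = WithLp.toLp 2 (A *ᵥ x) := rfl

theorem adjoint_toEuclideanCLM' [DecidableEq m] (A : Matrix m n ℝ) :
    (toEuclideanCLM' A)† = toEuclideanCLM' Aᵀ := by
  rw [← conjTranspose_eq_transpose_of_trivial]
  exact congrArg LinearMap.toContinuousLinearMap (toEuclideanLin_conjTranspose_eq_adjoint A) |>.symm

end Matrix

theorem stmt10_general {m n : ℕ} (A B : Matrix (Fin m) (Fin n) ℝ) (a : Fin n → ℝ)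
    (ha : ∑ i, (a i)^2 = 1)
    (heig : (Aᵀ * A).mulVec a = ((opN A)^2) • a)
    (hsimple : ∀ w : Fin n → ℝ, w ≠ 0 → (Aᵀ * A).mulVec w = ((opN A)^2) • w →
      ∃ c : ℝ, w = c • a) :
    HasDerivAt (fun s : ℝ => (opN (A + s • B))^2)
      (2 * (A.mulVec a ⬝ᵥ B.mulVec a)) 0 := by
  set T := toEuclideanCLM' A
  have hT : opN A = ‖T‖ := rfl
  have hS (x : Fin n → ℝ) : (T† ∘L T) (WithLp.toLp 2 x) = WithLp.toLp 2 ((Aᵀ * A) *ᵥ x) := by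
    rw [ContinuousLinearMap.comp_apply, adjoint_toEuclideanCLM', toEuclideanCLM'_toLp,
      toEuclideanCLM'_toLp, mulVec_mulVec]
  have ha' : ‖WithLp.toLp 2 a‖ = 1 := by simp [EuclideanSpace.norm_eq, ha]
  have heig' : (T† ∘L T) (WithLp.toLp 2 a) = ‖T‖ ^ 2 • WithLp.toLp 2 a := by
    rw [hS, heig, hT]; rfl
  have hsimple' (w) (hw : w ≠ 0) (hTw : (T† ∘L T) w = ‖T‖ ^ 2 • w) :
      ∃ c : ℝ, w = c • WithLp.toLp 2 a := by
    obtain ⟨c, hc⟩ := hsimple w.ofLp (by simpa using hw) (by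
      rw [hT, ← WithLp.ofLp_toLp 2 ((Aᵀ * A) *ᵥ w.ofLp), ← hS, WithLp.toLp_ofLp, hTw]; rfl)
    exact ⟨c, by rw [← WithLp.toLp_ofLp 2 w, hc]; rfl⟩
  convert T.hasDerivAt_norm_add_smul_sq (toEuclideanCLM' B) ha'
    (T.norm_apply_eq_of_adjoint_comp_self_apply_eq ha' heig')
    (fun _ hv hTv ↦ T.eq_or_eq_neg_of_norm_apply_eq ha' hsimple' hv hTv) using 1
  · ext s
    rw [opN, ← map_smul, ← map_add]; rfl
  · rw [toEuclideanCLM'_toLp, toEuclideanCLM'_toLp, EuclideanSpace.inner_toLp_toLp, star_trivial,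
      dotProduct_comm]

theorem stmt10 {m n : ℕ} (A B : Matrix (Fin m) (Fin n) ℝ) (a : Fin n → ℝ)
    (ha : ∑ i, (a i)^2 = 1)
    (heig : (Aᵀ * A).mulVec a = ((opN A)^2) • a)
    (hsimple : ∀ w : Fin n → ℝ, w ≠ 0 → (Aᵀ * A).mulVec w = ((opN A)^2) • w →
      ∃ c : ℝ, w = c • a)
    (hgap : ∀ w : Fin n → ℝ, ∀ μ : ℝ, w ≠ 0 → (Aᵀ * A).mulVec w = μ • w →
      μ ≤ (opN A)^2) :
    HasDerivAt (fun s : ℝ => (opN (A + s • B))^2)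
      (2 * (A.mulVec a ⬝ᵥ B.mulVec a)) 0 :=
  stmt10_general A B a ha heig hsimple
end

section
/- For t ∈ [0,1], define u_t : B₁(0) ⊆ ℝ² → ℝ² (identifying ℝ² with ℂ) by u_t(z) := t z² + (1 − t) z²/|z| (and u_t(0) := 0). Then the local Lipschitz constant satisfies L u_t(x) = 2 + 2t(|x| − 1) for x ∈ B₁(0)∖{0}. Consequently, for 0 ≤ t₂ < t₁ ≤ 1, L u_{t₁}(x) < L u_{t₂}(x) at every x ∈ B₁(0)∖{0}, while u_{t₁} = u_{t₂} on ∂B₁(0); hence u_{t₁} is tighter than u_{t₂} on B₁(0). -/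
/-- The Lipschitz constant of `f` on `s`: `Lip(f,s) = sup_{x ≠ y ∈ s} ‖f x - f y‖/‖x - y‖`. -/
noncomputable def LipOn (f : ℂ → ℂ) (s : Set ℂ) : ℝ :=
  sSup {c : ℝ | ∃ x ∈ s, ∃ y ∈ s, x ≠ y ∧ c = ‖f x - f y‖ / ‖x - y‖}

/-- The local Lipschitz constant `L f(x) = inf_{r>0} Lip(f, U ∩ B_r(x))`. -/
noncomputable def Lloc (U : Set ℂ) (f : ℂ → ℂ) (x : ℂ) : ℝ :=
  sInf {c : ℝ | ∃ r > (0:ℝ), c = LipOn f (U ∩ Metric.ball x r)}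

/-- `v` is tighter than `u` on `U`. -/
def TighterC (U : Set ℂ) (v u : ℂ → ℂ) : Prop :=
  (∀ x ∈ frontier U, v x = u x) ∧
    sSup {c : ℝ | ∃ x ∈ U, Lloc U u x = c ∧ Lloc U v x < Lloc U u x} >
      sSup {c : ℝ | ∃ x ∈ U, Lloc U v x = c ∧ Lloc U u x < Lloc U v x}

/-- The family `u_t(z) = t z² + (1-t) z²/|z|`, with `u_t(0) = 0`. -/
noncomputable def ut (t : ℝ) (z : ℂ) : ℂ :=
  if z = 0 then 0 else (t : ℂ) * z^2 + ((1 - t : ℝ) : ℂ) * z^2 / (‖z‖ : ℂ)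

/-!
Write `u_t z = t z² + (1 - t) z²/|z|`. On `|z|, |w| ≤ M` the map `z ↦ z²` is `2M`-Lipschitz and
`z ↦ z²/|z|` is `2`-Lipschitz, so `Lip(u_t)` on small balls around `x` is at most about
`2t|x| + 2(1 - t)`. Conversely `u_t (c z) = c² u_t z` for `|c| = 1`, so the difference quotient of
`u_t` between `p` and `c p` is `|c + 1| (t|p| + 1 - t)`, which tends to `2(t|p| + 1 - t)` as `c → 1`
along the circle. Hence `L u_t` is strictly decreasing in `t`, while every `u_t` equals `z²` on the
unit circle.
-/

open Complex Metric Set Filter Topology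

section LocalLipschitz

variable {f : ℂ → ℂ} {s U : Set ℂ} {x : ℂ}

lemma lipOn_nonneg (f : ℂ → ℂ) (s : Set ℂ) : 0 ≤ LipOn f s :=
  Real.sSup_nonneg <| by rintro _ ⟨x, -, y, -, -, rfl⟩; positivity

lemma lipOn_le {K : ℝ} (hK : 0 ≤ K) (hf : ∀ x ∈ s, ∀ y ∈ s, ‖f x - f y‖ ≤ K * ‖x - y‖) :
    LipOn f s ≤ K := by
  refine Real.sSup_le ?_ hK
  rintro _ ⟨x, hx, y, hy, -, rfl⟩
  exact div_le_of_le_mul₀ (norm_nonneg _) hK (hf x hx y hy)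

lemma div_le_lipOn {K : ℝ} (hf : ∀ x ∈ s, ∀ y ∈ s, ‖f x - f y‖ ≤ K * ‖x - y‖) {x y : ℂ}
    (hx : x ∈ s) (hy : y ∈ s) (hxy : x ≠ y) : ‖f x - f y‖ / ‖x - y‖ ≤ LipOn f s := by
  refine le_csSup ⟨K, ?_⟩ ⟨x, hx, y, hy, hxy, rfl⟩
  rintro _ ⟨x, hx, y, hy, hxy, rfl⟩
  exact (div_le_iff₀ (norm_pos_iff.2 (sub_ne_zero.2 hxy))).2 (hf x hx y hy)

lemma lloc_nonneg : 0 ≤ Lloc U f x :=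
  Real.sInf_nonneg <| by rintro _ ⟨r, -, rfl⟩; exact lipOn_nonneg _ _

lemma lloc_le_lipOn {r : ℝ} (hr : 0 < r) : Lloc U f x ≤ LipOn f (U ∩ ball x r) :=
  csInf_le ⟨0, by rintro _ ⟨r, -, rfl⟩; exact lipOn_nonneg _ _⟩ ⟨r, hr, rfl⟩

lemma le_lloc {c : ℝ} (h : ∀ r > 0, c ≤ LipOn f (U ∩ ball x r)) : c ≤ Lloc U f x :=
  le_csInf ⟨_, 1, one_pos, rfl⟩ <| by rintro _ ⟨r, hr, rfl⟩; exact h r hr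

/-- The second supremum in `TighterC` is then over the empty set, hence `0` by the `sSup ∅`
convention, while the first is positive because `Lloc ≥ 0`. -/
lemma tighterC_of_forall_lloc_lt {u v : ℂ → ℂ} (hU : U.Nonempty)
    (hfr : ∀ x ∈ frontier U, v x = u x) (hlt : ∀ x ∈ U, Lloc U v x < Lloc U u x)
    (hbdd : BddAbove (Lloc U u '' U)) : TighterC U v u := by
  refine ⟨hfr, ?_⟩
  have hempty : {c : ℝ | ∃ x ∈ U, Lloc U v x = c ∧ Lloc U u x < Lloc U v x} = ∅ :=
    eq_empty_of_forall_notMem fun _ ⟨x, hx, _, h⟩ => (hlt x hx).not_gt h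
  have hbdd' : BddAbove {c : ℝ | ∃ x ∈ U, Lloc U u x = c ∧ Lloc U v x < Lloc U u x} :=
    hbdd.mono <| by rintro _ ⟨x, hx, rfl, -⟩; exact mem_image_of_mem _ hx
  obtain ⟨x, hx⟩ := hU
  rw [hempty, Real.sSup_empty]
  calc (0 : ℝ) ≤ Lloc U v x := lloc_nonneg
    _ < Lloc U u x := hlt x hx
    _ ≤ _ := le_csSup hbdd' ⟨x, hx, rfl, hlt x hx⟩

end LocalLipschitz

section SqDivNorm

/-- With `r = |z|`, `s = |w|`, `P = Re (z w̄)`, the difference of the squares of the two sides is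
`r s (2P - 2rs)² + 3 r² s² (r - s)²`. -/
lemma norm_norm_mul_sq_sub_le (z w : ℂ) :
    ‖(‖w‖ : ℂ) * z ^ 2 - ‖z‖ * w ^ 2‖ ≤ 2 * ‖z - w‖ * (‖z‖ * ‖w‖) := by
  have hz : ‖z‖ ^ 2 = z.re ^ 2 + z.im ^ 2 := by rw [Complex.sq_norm, normSq_apply]; ring
  have hw : ‖w‖ ^ 2 = w.re ^ 2 + w.im ^ 2 := by rw [Complex.sq_norm, normSq_apply]; ring
  have hsos : (2 * ‖z - w‖ * (‖z‖ * ‖w‖)) ^ 2 - ‖(‖w‖ : ℂ) * z ^ 2 - ‖z‖ * w ^ 2‖ ^ 2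
      = ‖z‖ * ‖w‖ * (2 * (z.re * w.re + z.im * w.im) - 2 * (‖z‖ * ‖w‖)) ^ 2
        + 3 * ‖z‖ ^ 2 * ‖w‖ ^ 2 * (‖z‖ - ‖w‖) ^ 2 := by
    have hzw : ‖z - w‖ ^ 2 = normSq (z - w) := Complex.sq_norm _
    rw [mul_pow, mul_pow, hzw, Complex.sq_norm]
    simp only [normSq_apply, sub_re, sub_im, mul_re, mul_im, ofReal_re, ofReal_im, pow_two]
    generalize ‖z‖ = r at *
    generalize ‖w‖ = s at *
    grind
  exact (pow_le_pow_iff_left₀ (norm_nonneg _) (by positivity) two_ne_zero).1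
    (sub_nonneg.1 (hsos ▸ by positivity))

lemma norm_sq_div_norm (z : ℂ) : ‖z ^ 2 / ‖z‖‖ = ‖z‖ := by
  rw [norm_div, norm_pow, norm_real, norm_norm, sq, mul_self_div_self]

lemma norm_sq_div_norm_sub_le (z w : ℂ) : ‖z ^ 2 / ‖z‖ - w ^ 2 / ‖w‖‖ ≤ 2 * ‖z - w‖ := by
  rcases eq_or_ne z 0 with rfl | hz
  · rw [zero_pow two_ne_zero, zero_div, zero_sub, norm_neg, norm_sq_div_norm, zero_sub, norm_neg]
    linarith [norm_nonneg w]
  rcases eq_or_ne w 0 with rfl | hw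
  · rw [zero_pow two_ne_zero, zero_div, sub_zero, norm_sq_div_norm, sub_zero]
    linarith [norm_nonneg z]
  have hz' : (‖z‖ : ℂ) ≠ 0 := ofReal_ne_zero.2 (norm_ne_zero_iff.2 hz)
  have hw' : (‖w‖ : ℂ) ≠ 0 := ofReal_ne_zero.2 (norm_ne_zero_iff.2 hw)
  rw [div_sub_div _ _ hz' hw', norm_div, div_le_iff₀ (norm_pos_iff.2 (mul_ne_zero hz' hw')),
    norm_mul, norm_real, norm_real, norm_norm, norm_norm, mul_comm (z ^ 2)]
  exact norm_norm_mul_sq_sub_le z w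

lemma norm_sq_sub_sq_le {M : ℝ} {z w : ℂ} (hz : ‖z‖ ≤ M) (hw : ‖w‖ ≤ M) :
    ‖z ^ 2 - w ^ 2‖ ≤ 2 * M * ‖z - w‖ := by
  rw [sq_sub_sq, norm_mul]
  gcongr
  linarith [norm_add_le z w]

end SqDivNorm

lemma exp_mul_I_ne_one {θ : ℝ} (hθ0 : θ ≠ 0) (hθ : θ ∈ Ioo (-Real.pi) Real.pi) :
    exp (θ * I) ≠ 1 := by
  intro h
  rw [← exp_zero] at h
  have := exp_inj_of_neg_pi_lt_of_le_pi (by simpa using hθ.1) (by simpa using hθ.2.le)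
    (by simpa using Real.pi_pos) (by simpa using Real.pi_pos.le) h
  exact hθ0 (by simpa using this)

section Ut

variable {t : ℝ}

lemma ut_apply (t : ℝ) (z : ℂ) : ut t z = t * z ^ 2 + (1 - t : ℝ) * (z ^ 2 / ‖z‖) := by
  unfold ut
  split_ifs with hz <;> simp [hz, mul_div_assoc]

lemma ut_of_norm_eq_one (t : ℝ) {z : ℂ} (hz : ‖z‖ = 1) : ut t z = z ^ 2 := by
  rw [ut_apply, hz]
  push_cast
  ring

lemma ut_mul_of_norm_eq_one (t : ℝ) {c : ℂ} (hc : ‖c‖ = 1) (z : ℂ) :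
    ut t (c * z) = c ^ 2 * ut t z := by
  rw [ut_apply, ut_apply, norm_mul, hc, one_mul]
  ring

lemma norm_ut (ht0 : 0 ≤ t) (ht1 : t ≤ 1) (z : ℂ) :
    ‖ut t z‖ = (t * ‖z‖ + (1 - t)) * ‖z‖ := by
  rcases eq_or_ne z 0 with rfl | hz
  · simp [ut]
  have hz' : ‖z‖ ≠ 0 := norm_ne_zero_iff.2 hz
  have : ut t z = ((t + (1 - t) / ‖z‖ : ℝ) : ℂ) * z ^ 2 := by
    rw [ut_apply]
    push_cast
    ring
  rw [this, norm_mul, norm_real, norm_pow, Real.norm_of_nonneg (by positivity)]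
  field_simp

lemma norm_ut_sub_le (ht0 : 0 ≤ t) (ht1 : t ≤ 1) {M : ℝ} {z w : ℂ} (hz : ‖z‖ ≤ M)
    (hw : ‖w‖ ≤ M) : ‖ut t z - ut t w‖ ≤ (2 * t * M + 2 * (1 - t)) * ‖z - w‖ := by
  have hdiff : ut t z - ut t w
      = t * (z ^ 2 - w ^ 2) + (1 - t : ℝ) * (z ^ 2 / ‖z‖ - w ^ 2 / ‖w‖) := by
    rw [ut_apply, ut_apply]
    ring
  calc ‖ut t z - ut t w‖
      ≤ t * ‖z ^ 2 - w ^ 2‖ + (1 - t) * ‖z ^ 2 / ‖z‖ - w ^ 2 / ‖w‖‖ := by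
        rw [hdiff]
        refine (norm_add_le _ _).trans_eq ?_
        rw [norm_mul, norm_mul, norm_real, norm_real, Real.norm_of_nonneg ht0,
          Real.norm_of_nonneg (sub_nonneg.2 ht1)]
    _ ≤ t * (2 * M * ‖z - w‖) + (1 - t) * (2 * ‖z - w‖) := by
        have h1t : 0 ≤ 1 - t := sub_nonneg.2 ht1
        gcongr
        exacts [norm_sq_sub_sq_le hz hw, norm_sq_div_norm_sub_le z w]
    _ = (2 * t * M + 2 * (1 - t)) * ‖z - w‖ := by ring

lemma norm_ut_mul_sub_div (ht0 : 0 ≤ t) (ht1 : t ≤ 1) {c p : ℂ} (hc : ‖c‖ = 1) (hc1 : c ≠ 1)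
    (hp : p ≠ 0) : ‖ut t (c * p) - ut t p‖ / ‖c * p - p‖ = ‖c + 1‖ * (t * ‖p‖ + (1 - t)) := by
  have hnum : ut t (c * p) - ut t p = (c + 1) * (c - 1) * ut t p := by
    rw [ut_mul_of_norm_eq_one t hc]
    ring
  have hden : c * p - p = (c - 1) * p := by ring
  have hc1' : ‖c - 1‖ ≠ 0 := norm_ne_zero_iff.2 (sub_ne_zero.2 hc1)
  have hp' : ‖p‖ ≠ 0 := norm_ne_zero_iff.2 hp
  rw [hnum, hden, norm_mul, norm_mul, norm_mul, norm_ut ht0 ht1]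
  field_simp

lemma two_mul_le_lipOn_ut (ht0 : 0 ≤ t) (ht1 : t ≤ 1) {s : Set ℂ} {M : ℝ} (hs : IsOpen s)
    (hsM : s ⊆ closedBall 0 M) {p : ℂ} (hp : p ∈ s) (hp0 : p ≠ 0) :
    2 * (t * ‖p‖ + (1 - t)) ≤ LipOn (ut t) s := by
  have hlip : ∀ x ∈ s, ∀ y ∈ s, ‖ut t x - ut t y‖ ≤ (2 * t * M + 2 * (1 - t)) * ‖x - y‖ :=
    fun x hx y hy => norm_ut_sub_le ht0 ht1 (mem_closedBall_zero_iff.1 (hsM hx))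
      (mem_closedBall_zero_iff.1 (hsM hy))
  have hlim : Tendsto (fun θ : ℝ => ‖exp (θ * I) + 1‖ * (t * ‖p‖ + (1 - t))) (𝓝[≠] 0)
      (𝓝 (2 * (t * ‖p‖ + (1 - t)))) := by
    have hcont : Continuous fun θ : ℝ => ‖exp (θ * I) + 1‖ * (t * ‖p‖ + (1 - t)) := by fun_prop
    simpa [one_add_one_eq_two] using (hcont.tendsto 0).mono_left nhdsWithin_le_nhds
  have hmem : ∀ᶠ θ : ℝ in 𝓝 0, exp (θ * I) * p ∈ s := by
    have hcont : Continuous fun θ : ℝ => exp (θ * I) * p := by fun_prop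
    exact hcont.continuousAt.preimage_mem_nhds (by simpa using hs.mem_nhds hp)
  have hpi : ∀ᶠ θ : ℝ in 𝓝 0, θ ∈ Ioo (-Real.pi) Real.pi :=
    Ioo_mem_nhds (by linarith [Real.pi_pos]) Real.pi_pos
  refine le_of_tendsto hlim ?_
  filter_upwards [nhdsWithin_le_nhds hmem, nhdsWithin_le_nhds hpi, self_mem_nhdsWithin]
    with θ hθs hθπ hθ0
  have hc1 := exp_mul_I_ne_one hθ0 hθπ
  rw [← norm_ut_mul_sub_div ht0 ht1 (norm_exp_ofReal_mul_I θ) hc1 hp0]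
  exact div_le_lipOn hlip hθs hp fun h => hc1 ((mul_eq_right₀ hp0).1 h)

theorem lloc_ut (ht0 : 0 ≤ t) (ht1 : t ≤ 1) {x : ℂ} (hx : x ∈ ball (0 : ℂ) 1) :
    Lloc (ball 0 1) (ut t) x = 2 + 2 * t * (‖x‖ - 1) := by
  refine le_antisymm (le_of_forall_pos_le_add fun ε hε => ?_) (le_lloc fun r hr => ?_)
  · have hsub : ball (0 : ℂ) 1 ∩ ball x (ε / 2) ⊆ closedBall 0 (‖x‖ + ε / 2) := by
      intro z hz
      rw [mem_closedBall_zero_iff]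
      linarith [norm_le_norm_add_norm_sub' z x, mem_ball_iff_norm.1 hz.2]
    calc Lloc (ball 0 1) (ut t) x ≤ LipOn (ut t) (ball 0 1 ∩ ball x (ε / 2)) :=
          lloc_le_lipOn (half_pos hε)
      _ ≤ 2 * t * (‖x‖ + ε / 2) + 2 * (1 - t) :=
          lipOn_le (by positivity) fun z hz w hw => norm_ut_sub_le ht0 ht1
            (mem_closedBall_zero_iff.1 (hsub hz)) (mem_closedBall_zero_iff.1 (hsub hw))
      _ ≤ 2 + 2 * t * (‖x‖ - 1) + ε := by nlinarith
  · have hopen : IsOpen (ball (0 : ℂ) 1 ∩ ball x r) := isOpen_ball.inter isOpen_ball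
    obtain ⟨p, hp, hp0, hxp⟩ : ∃ p ∈ ball (0 : ℂ) 1 ∩ ball x r, p ≠ 0 ∧ ‖x‖ ≤ ‖p‖ := by
      rcases eq_or_ne x 0 with rfl | hx0
      · obtain ⟨p, hp, hp0⟩ := nonempty_of_mem (f := 𝓝[≠] (0 : ℂ))
          (inter_mem (mem_nhdsWithin_of_mem_nhds (hopen.mem_nhds ⟨hx, mem_ball_self hr⟩))
            self_mem_nhdsWithin)
        exact ⟨p, hp, hp0, by simp⟩
      · exact ⟨x, ⟨hx, mem_ball_self hr⟩, hx0, le_rfl⟩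
    calc 2 + 2 * t * (‖x‖ - 1) ≤ 2 * (t * ‖p‖ + (1 - t)) := by nlinarith
      _ ≤ LipOn (ut t) (ball 0 1 ∩ ball x r) :=
          two_mul_le_lipOn_ut ht0 ht1 hopen (inter_subset_left.trans ball_subset_closedBall)
            hp hp0

end Ut

theorem stmt11 :
    (∀ t ∈ Set.Icc (0:ℝ) 1, ∀ x ∈ Metric.ball (0:ℂ) 1, x ≠ 0 →
      Lloc (Metric.ball 0 1) (ut t) x = 2 + 2 * t * (‖x‖ - 1)) ∧
    (∀ t₁ t₂ : ℝ, 0 ≤ t₂ → t₂ < t₁ → t₁ ≤ 1 →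
      (∀ x ∈ Metric.ball (0:ℂ) 1, x ≠ 0 →
        Lloc (Metric.ball 0 1) (ut t₁) x < Lloc (Metric.ball 0 1) (ut t₂) x) ∧
      (∀ z ∈ Metric.sphere (0:ℂ) 1, ut t₁ z = ut t₂ z) ∧
      TighterC (Metric.ball 0 1) (ut t₁) (ut t₂)) := by
  refine ⟨fun t ht x hx _ => lloc_ut ht.1 ht.2 hx, fun t₁ t₂ ht₂0 hlt ht₁1 => ?_⟩
  have hlt' : ∀ x ∈ ball (0 : ℂ) 1, Lloc (ball 0 1) (ut t₁) x < Lloc (ball 0 1) (ut t₂) x := by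
    intro x hx
    rw [lloc_ut (ht₂0.trans hlt.le) ht₁1 hx, lloc_ut ht₂0 (hlt.le.trans ht₁1) hx]
    nlinarith [mem_ball_zero_iff.1 hx]
  have hsphere : ∀ z ∈ sphere (0 : ℂ) 1, ut t₁ z = ut t₂ z := fun z hz => by
    rw [ut_of_norm_eq_one t₁ (mem_sphere_zero_iff_norm.1 hz),
      ut_of_norm_eq_one t₂ (mem_sphere_zero_iff_norm.1 hz)]
  have hbdd : BddAbove (Lloc (ball 0 1) (ut t₂) '' ball 0 1) := by
    refine ⟨2, ?_⟩
    rintro _ ⟨x, hx, rfl⟩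
    rw [lloc_ut ht₂0 (hlt.le.trans ht₁1) hx]
    nlinarith [mem_ball_zero_iff.1 hx]
  refine ⟨fun x hx _ => hlt' x hx, hsphere, tighterC_of_forall_lloc_lt ⟨0, mem_ball_self one_pos⟩
    (by rwa [frontier_ball 0 one_ne_zero]) hlt' hbdd⟩
end

section
/- Let f be analytic with f' ≠ 0 on a domain in ℂ. Writing g = Re f, one has Δ_∞ g ≥ 0 (equivalently Δ₁ g = Δg − Δ_∞g ≤ 0, since Δg = 0) if and only if Re[f''/(f')²] ≥ 0, where Δ_∞ g := |Dg|^{-2} g_{x_i} g_{x_j} g_{x_i x_j}. -/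
/-!
Since `g = Re f` has gradient `(Re f', -Im f')`, i.e. `conj f'`, and its second derivatives are
given in the same way by `f''`, the quadratic form `gᵢ gⱼ gᵢⱼ` equals `Re (f'' · conj f' ²)`.
Dividing by `|Dg|² = |f'|²` gives `Δ_∞ g = |f'|² · Re (f'' / f'²)`, and `|f'|² > 0`.
-/

/-- The real part of `f`, viewed as a function on `ℝ²`. -/
noncomputable def gR (f : ℂ → ℂ) : ℝ × ℝ → ℝ := fun p => (f (p.1 + p.2 * Complex.I)).re

/-- Partial derivative of `Re f` in the `x`-direction. -/
noncomputable def gx (f : ℂ → ℂ) (p : ℝ × ℝ) : ℝ := fderiv ℝ (gR f) p (1, 0)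

/-- Partial derivative of `Re f` in the `y`-direction. -/
noncomputable def gy (f : ℂ → ℂ) (p : ℝ × ℝ) : ℝ := fderiv ℝ (gR f) p (0, 1)

/-- The (normalized) infinity Laplacian
`Δ_∞ g = |Dg|⁻² (g_x² g_xx + 2 g_x g_y g_xy + g_y² g_yy)` of `g = Re f`. -/
noncomputable def infLap (f : ℂ → ℂ) (p : ℝ × ℝ) : ℝ :=
  ((gx f p)^2 * fderiv ℝ (gx f) p (1, 0) +
    2 * gx f p * gy f p * fderiv ℝ (gx f) p (0, 1) +
    (gy f p)^2 * fderiv ℝ (gy f) p (0, 1)) / ((gx f p)^2 + (gy f p)^2)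

open Complex Filter Topology

lemma hasFDerivAt_gR {f : ℂ → ℂ} {f' : ℂ} {p : ℝ × ℝ} (hf : HasDerivAt f f' (p.1 + p.2 * I)) :
    HasFDerivAt (gR f) (reCLM.comp (f' • (equivRealProdCLM.symm : ℝ × ℝ →L[ℝ] ℂ))) p := by
  have he : HasFDerivAt (fun q : ℝ × ℝ => (q.1 + q.2 * I : ℂ))
      (equivRealProdCLM.symm : ℝ × ℝ →L[ℝ] ℂ) p :=
    equivRealProdCLM.symm.hasFDerivAt.congr_of_eventuallyEq
      (.of_forall fun q => (equivRealProdCLM_symm_apply q).symm)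
  exact reCLM.hasFDerivAt.comp p (hf.comp_hasFDerivAt p he)

lemma fderiv_gR_apply {f : ℂ → ℂ} {p : ℝ × ℝ} (hf : DifferentiableAt ℂ f (p.1 + p.2 * I))
    (v : ℝ × ℝ) : fderiv ℝ (gR f) p v = (deriv f (p.1 + p.2 * I) * (v.1 + v.2 * I)).re := by
  simp [(hasFDerivAt_gR hf.hasDerivAt).fderiv]

lemma gx_eq_re_deriv {f : ℂ → ℂ} {p : ℝ × ℝ} (hf : DifferentiableAt ℂ f (p.1 + p.2 * I)) :
    gx f p = (deriv f (p.1 + p.2 * I)).re := by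
  simp [gx, fderiv_gR_apply hf]

lemma gy_eq_neg_im_deriv {f : ℂ → ℂ} {p : ℝ × ℝ} (hf : DifferentiableAt ℂ f (p.1 + p.2 * I)) :
    gy f p = -(deriv f (p.1 + p.2 * I)).im := by
  simp [gy, fderiv_gR_apply hf]

section SecondDerivatives

variable {f : ℂ → ℂ} {p : ℝ × ℝ}

lemma eventually_analyticAt_realProd (hf : AnalyticAt ℂ f (p.1 + p.2 * I)) :
    ∀ᶠ q : ℝ × ℝ in 𝓝 p, AnalyticAt ℂ f (q.1 + q.2 * I) :=
  (show Continuous fun q : ℝ × ℝ => (q.1 + q.2 * I : ℂ) by fun_prop).continuousAt.eventually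
    hf.eventually_analyticAt

lemma gx_eventuallyEq (hf : AnalyticAt ℂ f (p.1 + p.2 * I)) :
    gx f =ᶠ[𝓝 p] gR (deriv f) := by
  filter_upwards [eventually_analyticAt_realProd hf] with q hq
  rw [gx_eq_re_deriv hq.differentiableAt, gR]

lemma gy_eventuallyEq (hf : AnalyticAt ℂ f (p.1 + p.2 * I)) :
    gy f =ᶠ[𝓝 p] gR (fun w => I * deriv f w) := by
  filter_upwards [eventually_analyticAt_realProd hf] with q hq
  simp [gy_eq_neg_im_deriv hq.differentiableAt, gR]

lemma fderiv_gx_apply (hf : AnalyticAt ℂ f (p.1 + p.2 * I)) (v : ℝ × ℝ) :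
    fderiv ℝ (gx f) p v = (deriv (deriv f) (p.1 + p.2 * I) * (v.1 + v.2 * I)).re := by
  rw [(gx_eventuallyEq hf).fderiv_eq, fderiv_gR_apply hf.deriv.differentiableAt]

lemma fderiv_gy_apply (hf : AnalyticAt ℂ f (p.1 + p.2 * I)) (v : ℝ × ℝ) :
    fderiv ℝ (gy f) p v = (I * deriv (deriv f) (p.1 + p.2 * I) * (v.1 + v.2 * I)).re := by
  rw [(gy_eventuallyEq hf).fderiv_eq,
    fderiv_gR_apply (hf.deriv.differentiableAt.const_mul I),
    deriv_const_mul _ hf.deriv.differentiableAt]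

end SecondDerivatives

lemma infLap_eq_normSq_mul_re {f : ℂ → ℂ} {z : ℂ} (hf : AnalyticAt ℂ f z) :
    infLap f (z.re, z.im) = normSq (deriv f z) * (deriv (deriv f) z / deriv f z ^ 2).re := by
  have hf' : AnalyticAt ℂ f ((z.re, z.im).1 + (z.re, z.im).2 * I) := by rwa [re_add_im]
  simp only [infLap, gx_eq_re_deriv hf'.differentiableAt, gy_eq_neg_im_deriv hf'.differentiableAt,
    fderiv_gx_apply hf', fderiv_gy_apply hf', re_add_im]
  generalize deriv f z = a, deriv (deriv f) z = b
  rcases eq_or_ne a 0 with rfl | ha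
  · simp
  have h : normSq a ≠ 0 := normSq_pos.mpr ha |>.ne'
  simp only [ofReal_one, ofReal_zero, zero_mul, add_zero, zero_add, one_mul, mul_one, div_re,
    pow_two, mul_re, mul_im, I_re, I_im, map_mul, normSq_apply] at h ⊢
  field_simp
  ring

theorem stmt15_general (U : Set ℂ) (f : ℂ → ℂ)
    (hf : ∀ z ∈ U, AnalyticAt ℂ f z) (hf' : ∀ z ∈ U, deriv f z ≠ 0) :
    ∀ z ∈ U, (0 ≤ infLap f (z.re, z.im) ↔
      0 ≤ (deriv (deriv f) z / (deriv f z)^2).re) := by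
  intro z hz
  rw [infLap_eq_normSq_mul_re (hf z hz)]
  exact mul_nonneg_iff_of_pos_left (normSq_pos.mpr (hf' z hz))

theorem stmt15 (U : Set ℂ) (hU : IsOpen U) (f : ℂ → ℂ)
    (hf : ∀ z ∈ U, AnalyticAt ℂ f z) (hf' : ∀ z ∈ U, deriv f z ≠ 0) :
    ∀ z ∈ U, (0 ≤ infLap f (z.re, z.im) ↔
      0 ≤ (deriv (deriv f) z / (deriv f z)^2).re) :=
  stmt15_general U f hf hf'
end
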